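/- arXiv:2401.08877 — 6 statements merged into one kernel-verified Lean document; each statement's English description precedes it below -/
import Mathlib

section
/- Let φ : ℝ → ℂ be a Schwartz function and let c > 0. Then the function t ↦ M(φ)(c+it) = ∫₀^∞ φ(x) x^{c+it−1} dx belongs to the Schwartz space 𝓢(ℝ,ℂ); i.e. it is smooth and for all α, β ∈ ℕ, sup_{t∈ℝ} |t^α · (d/dt)^β M(φ)(c+it)| < ∞. -/
open MeasureTheory Complex Set

open scoped FourierTransform Real ContDiff

/-!
The substitution `x = e^{-u}` turns `M(φ)(c + it)` into the Fourier transform of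
`g(u) = e^{-cu} φ(e^{-u})` at `t / 2π` (`mellin_eq_fourier`), so it suffices that `g` is a
Schwartz function. Differentiating `e^{-su} φ⁽ʲ⁾(e^{-u})` gives a combination of the same
expression with `s` and `s + 1`, `j` and `j + 1`, and each such function is `O(e^{-s|u|})`:
as `u → +∞` by the weight, as `u → -∞` by the rapid decay of `φ⁽ʲ⁾`. Exponential decay beats
every polynomial weight.
-/

theorem abs_pow_mul_exp_neg_mul_abs_le (k : ℕ) {b : ℝ} (hb : 0 < b) (u : ℝ) :
    |u| ^ k * Real.exp (-b * |u|) ≤ k.factorial / b ^ k := by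
  have h := Real.pow_div_factorial_le_exp (x := b * |u|) (mul_nonneg hb.le (abs_nonneg u)) k
  rw [div_le_iff₀ (by positivity), mul_pow] at h
  rw [le_div_iff₀ (by positivity), neg_mul, Real.exp_neg]
  calc |u| ^ k * (Real.exp (b * |u|))⁻¹ * b ^ k
      = b ^ k * |u| ^ k * (Real.exp (b * |u|))⁻¹ := by ring
    _ ≤ Real.exp (b * |u|) * k.factorial * (Real.exp (b * |u|))⁻¹ := by gcongr
    _ = k.factorial := by field_simp

theorem exists_abs_pow_mul_norm_le_of_norm_le_exp {E : Type*} [NormedAddCommGroup E]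
    {f : ℝ → E} {D b : ℝ} (hb : 0 < b) (hf : ∀ u, ‖f u‖ ≤ D * Real.exp (-b * |u|)) (k : ℕ) :
    ∃ C, ∀ u, |u| ^ k * ‖f u‖ ≤ C := by
  have hD : 0 ≤ D := by simpa using (norm_nonneg _).trans (hf 0)
  refine ⟨D * (k.factorial / b ^ k), fun u => ?_⟩
  calc |u| ^ k * ‖f u‖ ≤ |u| ^ k * (D * Real.exp (-b * |u|)) := by gcongr; exact hf u
    _ = D * (|u| ^ k * Real.exp (-b * |u|)) := by ring
    _ ≤ D * (k.factorial / b ^ k) := by gcongr; exact abs_pow_mul_exp_neg_mul_abs_le k hb u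

namespace SchwartzMap

noncomputable def expWeightedDeriv (φ : 𝓢(ℝ, ℂ)) (s : ℝ) (j : ℕ) (u : ℝ) : ℂ :=
  Real.exp (-s * u) • iteratedDeriv j φ (Real.exp (-u))

variable (φ : 𝓢(ℝ, ℂ))

theorem contDiff_iteratedDeriv (j : ℕ) : ContDiff ℝ ∞ (iteratedDeriv j φ) := by
  rw [iteratedDeriv_eq_iterate]
  exact (φ.smooth ⊤).iterate_deriv j

theorem contDiff_expWeightedDeriv (s : ℝ) (j : ℕ) : ContDiff ℝ ∞ (φ.expWeightedDeriv s j) :=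
  (Real.contDiff_exp.comp (contDiff_const.mul contDiff_id)).smul
    ((φ.contDiff_iteratedDeriv j).comp (Real.contDiff_exp.comp contDiff_neg))

theorem hasDerivAt_expWeightedDeriv (s : ℝ) (j : ℕ) (u : ℝ) :
    HasDerivAt (φ.expWeightedDeriv s j)
      ((-s) • φ.expWeightedDeriv s j u - φ.expWeightedDeriv (s + 1) (j + 1) u) u := by
  have hweight : HasDerivAt (fun u => Real.exp (-s * u)) (Real.exp (-s * u) * -s) u := by
    simpa using ((hasDerivAt_id u).const_mul (-s)).exp
  have hsubst : HasDerivAt (fun u => Real.exp (-u)) (-Real.exp (-u)) u := by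
    simpa using (hasDerivAt_neg u).exp
  have hφ : HasDerivAt (iteratedDeriv j φ) (iteratedDeriv (j + 1) φ (Real.exp (-u)))
      (Real.exp (-u)) := by
    rw [iteratedDeriv_succ]
    exact ((φ.contDiff_iteratedDeriv j).differentiable (by simp) _).hasDerivAt
  have hcomp := hφ.scomp u hsubst
  refine (hweight.smul hcomp :
    HasDerivAt (φ.expWeightedDeriv s j) _ u).congr_deriv ?_
  have hexp : Real.exp (-(s + 1) * u) = Real.exp (-s * u) * Real.exp (-u) := by
    rw [← Real.exp_add]; ring_nf
  simp only [expWeightedDeriv, hexp, mul_smul, smul_neg, neg_smul]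
  rw [smul_comm s (Real.exp (-s * u))]
  abel

theorem deriv_expWeightedDeriv (s : ℝ) (j : ℕ) :
    deriv (φ.expWeightedDeriv s j) =
      fun u => (-s) • φ.expWeightedDeriv s j u - φ.expWeightedDeriv (s + 1) (j + 1) u :=
  funext fun u => (φ.hasDerivAt_expWeightedDeriv s j u).deriv

theorem exists_norm_expWeightedDeriv_le (s : ℝ) (j : ℕ) :
    ∃ D, ∀ u, ‖φ.expWeightedDeriv s j u‖ ≤ D * Real.exp (-s * |u|) := by
  set N := ⌈2 * s⌉₊
  set D := max (SchwartzMap.seminorm ℝ 0 j φ) (SchwartzMap.seminorm ℝ N j φ)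
  refine ⟨D, fun u => ?_⟩
  set y := ‖iteratedDeriv j φ (Real.exp (-u))‖
  have hnorm : ‖φ.expWeightedDeriv s j u‖ = Real.exp (-s * u) * y := by
    rw [expWeightedDeriv, norm_smul, Real.norm_of_nonneg (Real.exp_pos _).le]
  rw [hnorm]
  rcases le_or_gt 0 u with hu | hu
  · have hy : y ≤ D := by
      have h := φ.le_seminorm' ℝ 0 j (Real.exp (-u))
      rw [pow_zero, one_mul] at h
      exact h.trans (le_max_left _ _)
    rw [abs_of_nonneg hu, mul_comm]
    gcongr
  · -- the decay of `φ⁽ʲ⁾` at `e^{-u} → ∞` to order `N ≥ 2s` outweighs the growth of `e^{-su}`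
    have hy : Real.exp (N * -u) * y ≤ D := by
      have h := φ.le_seminorm' ℝ N j (Real.exp (-u))
      rw [abs_of_pos (Real.exp_pos _), ← Real.exp_nat_mul] at h
      exact h.trans (le_max_right _ _)
    have hN : (N : ℝ) * u ≤ 2 * s * u := mul_le_mul_of_nonpos_right (Nat.le_ceil _) hu.le
    calc Real.exp (-s * u) * y = Real.exp ((N - s) * u) * (Real.exp (N * -u) * y) := by
          rw [← mul_assoc, ← Real.exp_add]; ring_nf
      _ ≤ Real.exp (-s * |u|) * D := by
          rw [abs_of_neg hu]
          exact mul_le_mul (Real.exp_le_exp.mpr (by linarith)) hy (by positivity)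
            (Real.exp_pos _).le
      _ = D * Real.exp (-s * |u|) := mul_comm _ _

theorem exists_abs_pow_mul_norm_iteratedDeriv_expWeightedDeriv_le {s : ℝ} (hs : 0 < s)
    (n j k : ℕ) : ∃ C, ∀ u, |u| ^ k * ‖iteratedDeriv n (φ.expWeightedDeriv s j) u‖ ≤ C := by
  induction n generalizing s j with
  | zero =>
    obtain ⟨D, hD⟩ := φ.exists_norm_expWeightedDeriv_le s j
    simpa only [iteratedDeriv_zero] using exists_abs_pow_mul_norm_le_of_norm_le_exp hs hD k
  | succ n ih =>
    obtain ⟨C₁, hC₁⟩ := ih hs j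
    obtain ⟨C₂, hC₂⟩ := ih (s := s + 1) (by linarith) (j + 1)
    refine ⟨|s| * C₁ + C₂, fun u => ?_⟩
    have hderiv : iteratedDeriv (n + 1) (φ.expWeightedDeriv s j) u =
        (-s) • iteratedDeriv n (φ.expWeightedDeriv s j) u -
          iteratedDeriv n (φ.expWeightedDeriv (s + 1) (j + 1)) u := by
      rw [iteratedDeriv_succ', deriv_expWeightedDeriv, iteratedDeriv_fun_sub,
        iteratedDeriv_fun_const_smul_field]
      · exact ((φ.contDiff_expWeightedDeriv s j).const_smul (-s)).contDiffAt.of_le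
          (by exact_mod_cast le_top)
      · exact (φ.contDiff_expWeightedDeriv _ _).contDiffAt.of_le (by exact_mod_cast le_top)
    rw [hderiv]
    calc |u| ^ k * ‖(-s) • iteratedDeriv n (φ.expWeightedDeriv s j) u -
          iteratedDeriv n (φ.expWeightedDeriv (s + 1) (j + 1)) u‖
        ≤ |u| ^ k * (|s| * ‖iteratedDeriv n (φ.expWeightedDeriv s j) u‖ +
          ‖iteratedDeriv n (φ.expWeightedDeriv (s + 1) (j + 1)) u‖) := by
          gcongr
          refine (norm_sub_le _ _).trans_eq ?_
          rw [norm_smul, Real.norm_eq_abs, abs_neg]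
      _ = |s| * (|u| ^ k * ‖iteratedDeriv n (φ.expWeightedDeriv s j) u‖) +
          |u| ^ k * ‖iteratedDeriv n (φ.expWeightedDeriv (s + 1) (j + 1)) u‖ := by ring
      _ ≤ |s| * C₁ + C₂ := by gcongr; exacts [hC₁ u, hC₂ u]

noncomputable def expWeightedComp {s : ℝ} (hs : 0 < s) : 𝓢(ℝ, ℂ) where
  toFun := φ.expWeightedDeriv s 0
  smooth' := φ.contDiff_expWeightedDeriv s 0
  decay' k n := by
    simpa only [Real.norm_eq_abs, norm_iteratedFDeriv_eq_norm_iteratedDeriv] using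
      φ.exists_abs_pow_mul_norm_iteratedDeriv_expWeightedDeriv_le hs n 0 k

theorem coe_expWeightedComp {s : ℝ} (hs : 0 < s) :
    ⇑(φ.expWeightedComp hs) = fun u => Real.exp (-s * u) • φ (Real.exp (-u)) := by
  ext u
  change Real.exp (-s * u) • iteratedDeriv 0 φ (Real.exp (-u)) = _
  rw [iteratedDeriv_zero]

theorem mellin_eq_fourier_expWeightedComp {s : ℝ} (hs : 0 < s) (t : ℝ) :
    mellin φ (s + t * I) = 𝓕 (φ.expWeightedComp hs) (t / (2 * π)) := by
  have hre : ((s : ℂ) + t * I).re = s := by simp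
  have him : ((s : ℂ) + t * I).im = t := by simp
  rw [mellin_eq_fourier, hre, him, fourier_coe, coe_expWeightedComp]

end SchwartzMap

/-- for a Schwartz function `φ` and `c > 0`, the function
`t ↦ M(φ)(c+it) = ∫₀^∞ φ(x) x^{c+it−1} dx` belongs to the Schwartz space
`𝓢(ℝ,ℂ)`. -/
theorem mellin_schwartz_vertical_line_schwartz (φ : SchwartzMap ℝ ℂ) (c : ℝ)
    (hc : 0 < c) :
    ∃ ψ : SchwartzMap ℝ ℂ, ∀ t : ℝ,
      ψ t = ∫ x in Ioi (0 : ℝ), φ x * (x : ℂ) ^ ((c : ℂ) + (t : ℂ) * Complex.I - 1) := by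
  let rescale : ℝ ≃L[ℝ] ℝ :=
    ContinuousLinearEquiv.unitsEquivAut ℝ (Units.mk0 (2 * π)⁻¹ (by positivity))
  refine ⟨SchwartzMap.compCLMOfContinuousLinearEquiv ℂ rescale
    (𝓕 (φ.expWeightedComp hc)), fun t => ?_⟩
  have hmellin : mellin φ (c + t * I) =
      ∫ x in Ioi (0 : ℝ), φ x * (x : ℂ) ^ ((c : ℂ) + (t : ℂ) * Complex.I - 1) :=
    setIntegral_congr_fun measurableSet_Ioi fun x _ => by rw [smul_eq_mul, mul_comm]
  rw [← hmellin, φ.mellin_eq_fourier_expWeightedComp hc]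
  simp [rescale, div_eq_mul_inv]
end

section
/- Let φ : ℝ → ℂ be a Schwartz function, let c be a negative real number that is not an integer, let N ∈ ℕ satisfy N + c > 0, and let α ∈ ℕ. With a_n = φ^{(n)}(0)/n! and G_N(s) = ∫₀¹ (φ(x) − Σ_{n=0}^{N−1} a_n x^n) x^{s−1} dx + Σ_{n=0}^{N−1} a_n/(s+n) + ∫₁^∞ φ(x) x^{s−1} dx, one has sup_{t∈ℝ} |t^α · G_N(c+it)| < ∞. -/
open MeasureTheory Complex Set Finset

open Filter Topology

/-! Integrating by parts on `(0, 1]` and on `(1, ∞)`, with `x ^ s` as antiderivative of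
`s x ^ (s - 1)`, gives `s G_N(φ)(s) = -G_{N-1}(φ')(s + 1)` as long as `N + Re s > 0` and no
`s + n` vanishes. After `k = N + α` steps, `∏_{j<k} (s + j) G_N(φ)(s) = ± G_0(φ^{(k)})(s + k)`,
and `G_0(ψ)` is the plain Mellin transform of `ψ`, bounded on the line `Re = c + k > 0` by
`∫₀^∞ |ψ(x)| x^{c+k-1} dx`. On the line `Re s = c` the product has modulus at least `|t|^k`
and at least `∏_{j<k} |c + j| > 0`, which beats `|t|^α`. -/

noncomputable def taylorCoeff (f : ℝ → ℂ) (n : ℕ) : ℂ :=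
  iteratedDeriv n f 0 / (n.factorial : ℂ)

noncomputable def taylorRemainder (f : ℝ → ℂ) (N : ℕ) (x : ℝ) : ℂ :=
  f x - ∑ n ∈ range N, taylorCoeff f n * (x : ℂ) ^ n

noncomputable def mellinCont (f : ℝ → ℂ) (N : ℕ) (s : ℂ) : ℂ :=
  (∫ x in Ioc (0 : ℝ) 1, taylorRemainder f N x * (x : ℂ) ^ (s - 1)) +
    (∑ n ∈ range N, taylorCoeff f n / (s + (n : ℂ))) +
    ∫ x in Ioi (1 : ℝ), f x * (x : ℂ) ^ (s - 1)

lemma taylorCoeff_deriv (f : ℝ → ℂ) (n : ℕ) :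
    taylorCoeff (deriv f) n = taylorCoeff f (n + 1) * (n + 1) := by
  have hn : (n.factorial : ℂ) ≠ 0 := Nat.cast_ne_zero.mpr n.factorial_ne_zero
  rw [taylorCoeff, taylorCoeff, ← iteratedDeriv_succ', Nat.factorial_succ]
  push_cast
  field_simp

lemma hasDerivAt_taylorRemainder {f : ℝ → ℂ} {x : ℝ} (hf : DifferentiableAt ℝ f x) (N : ℕ) :
    HasDerivAt (taylorRemainder f N) (taylorRemainder (deriv f) (N - 1) x) x := by
  have hpoly : HasDerivAt (fun y : ℝ => ∑ n ∈ range N, taylorCoeff f n * (y : ℂ) ^ n)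
      (∑ n ∈ range N, taylorCoeff f n * (n * (x : ℂ) ^ (n - 1))) x :=
    HasDerivAt.fun_sum fun n _ => ((hasDerivAt_pow n (x : ℂ)).comp_ofReal).const_mul _
  refine (hf.hasDerivAt.sub hpoly).congr_deriv ?_
  rw [taylorRemainder]
  congr 1
  cases N with
  | zero => simp
  | succ M =>
    rw [sum_range_succ', Nat.add_sub_cancel]
    simp only [Nat.cast_zero, zero_mul, mul_zero, add_zero, taylorCoeff_deriv]
    refine sum_congr rfl fun n _ => ?_
    push_cast
    ring

lemma exists_norm_taylorRemainder_le {f : ℝ → ℂ} {N : ℕ} (hf : ContDiff ℝ N f) :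
    ∃ C, ∀ x ∈ Icc (0 : ℝ) 1, ‖taylorRemainder f N x‖ ≤ C * x ^ N := by
  cases N with
  | zero =>
    obtain ⟨C, hC⟩ := isCompact_Icc.exists_bound_of_continuousOn hf.continuous.continuousOn
    exact ⟨C, fun x hx => by simpa [taylorRemainder] using hC x hx⟩
  | succ M =>
    obtain ⟨C, hC⟩ := isCompact_Icc.exists_bound_of_continuousOn
      (hf.continuous_iteratedDeriv' (M + 1)).continuousOn (s := Icc (0 : ℝ) 1)
    have hwithin : ∀ k ≤ M + 1, ∀ y ∈ Icc (0 : ℝ) 1,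
        iteratedDerivWithin k f (Icc 0 1) y = iteratedDeriv k f y := fun k hk y hy =>
      iteratedDerivWithin_eq_iteratedDeriv (uniqueDiffOn_Icc zero_lt_one)
        (hf.of_le (by exact_mod_cast hk)).contDiffAt hy
    have htaylor : taylorWithinEval f M (Icc 0 1) 0 = fun x : ℝ =>
        ∑ n ∈ range (M + 1), taylorCoeff f n * (x : ℂ) ^ n := by
      ext x
      rw [taylor_within_apply]
      refine sum_congr rfl fun k hk => ?_
      rw [hwithin k (by simp at hk; omega) 0 (by simp), taylorCoeff, real_smul]
      push_cast
      ring
    refine ⟨C / M.factorial, fun x hx => ?_⟩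
    have key := taylor_mean_remainder_bound zero_le_one hf.contDiffOn hx
      fun y hy => (hwithin (M + 1) le_rfl y hy).symm ▸ hC y hy
    rw [htaylor, sub_zero] at key
    rw [taylorRemainder]
    convert key using 1
    ring

lemma continuous_taylorRemainder {f : ℝ → ℂ} (hf : Continuous f) (N : ℕ) :
    Continuous (taylorRemainder f N) := by
  unfold taylorRemainder
  fun_prop

lemma exists_norm_taylorRemainder_mul_cpow_le {f : ℝ → ℂ} {N : ℕ} (hf : ContDiff ℝ N f)
    (s : ℂ) : ∃ C, ∀ x ∈ Ioc (0 : ℝ) 1,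
      ‖taylorRemainder f N x * (x : ℂ) ^ s‖ ≤ C * x ^ (N + s.re) := by
  obtain ⟨C, hC⟩ := exists_norm_taylorRemainder_le hf
  refine ⟨C, fun x hx => ?_⟩
  rw [norm_mul, norm_cpow_eq_rpow_re_of_pos hx.1, Real.rpow_add hx.1, Real.rpow_natCast,
    ← mul_assoc]
  exact mul_le_mul_of_nonneg_right (hC x (Ioc_subset_Icc_self hx))
    (Real.rpow_nonneg hx.1.le _)

lemma integrableOn_taylorRemainder_mul_cpow {f : ℝ → ℂ} {N : ℕ} (hf : ContDiff ℝ N f)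
    {s : ℂ} (hs : 0 < N + s.re) :
    IntegrableOn (fun x : ℝ => taylorRemainder f N x * (x : ℂ) ^ (s - 1)) (Ioc 0 1) := by
  obtain ⟨C, hC⟩ := exists_norm_taylorRemainder_mul_cpow_le hf (s - 1)
  have hdom : IntegrableOn (fun x : ℝ => C * x ^ (N + (s - 1).re)) (Ioc 0 1) :=
    ((intervalIntegrable_iff_integrableOn_Ioc_of_le zero_le_one).mp
      (intervalIntegral.intervalIntegrable_rpow' (by simp; linarith))).const_mul C
  refine hdom.mono' ?_ ((ae_restrict_iff' measurableSet_Ioc).mpr (ae_of_all _ hC))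
  refine ContinuousOn.aestronglyMeasurable (fun x hx => ?_) measurableSet_Ioc
  exact ((continuous_taylorRemainder hf.continuous N).continuousAt.mul
    (continuousAt_ofReal_cpow_const x _ (Or.inr hx.1.ne'))).continuousWithinAt

lemma tendsto_taylorRemainder_mul_cpow {f : ℝ → ℂ} {N : ℕ} (hf : ContDiff ℝ N f)
    {s : ℂ} (hs : 0 < N + s.re) :
    Tendsto (fun x : ℝ => taylorRemainder f N x * (x : ℂ) ^ s) (𝓝[>] 0) (𝓝 0) := by
  obtain ⟨C, hC⟩ := exists_norm_taylorRemainder_mul_cpow_le hf s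
  have hlim : Tendsto (fun x : ℝ => C * x ^ (N + s.re)) (𝓝[>] 0) (𝓝 0) := by
    have h := ((Real.continuousAt_rpow_const 0 _ (Or.inr hs.le)).tendsto.mono_left
      (nhdsWithin_le_nhds (s := Ioi 0))).const_mul C
    rwa [Real.zero_rpow hs.ne', mul_zero] at h
  refine squeeze_zero_norm' ?_ hlim
  filter_upwards [Ioc_mem_nhdsGT zero_lt_one] with x hx using hC x hx

lemma norm_mul_ofReal_cpow_le {x : ℝ} (hx : 1 ≤ x) {w : ℂ} {m : ℕ} (hm : w.re ≤ m) (z : ℂ) :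
    ‖z * (x : ℂ) ^ w‖ ≤ x ^ m * ‖z‖ := by
  rw [norm_mul, norm_cpow_eq_rpow_re_of_pos (zero_lt_one.trans_le hx), mul_comm,
    ← Real.rpow_natCast]
  exact mul_le_mul_of_nonneg_right (Real.rpow_le_rpow_of_exponent_le hx hm) (norm_nonneg z)

lemma SchwartzMap.integrableOn_Ioi_one_mul_cpow (φ : SchwartzMap ℝ ℂ) (w : ℂ) :
    IntegrableOn (fun x : ℝ => φ x * (x : ℂ) ^ w) (Ioi 1) := by
  refine (φ.integrable_pow_mul volume ⌈w.re⌉₊).integrableOn.mono' ?_ ?_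
  · refine ContinuousOn.aestronglyMeasurable (fun x hx => ?_) measurableSet_Ioi
    exact (φ.continuous.continuousAt.mul (continuousAt_ofReal_cpow_const x _
      (Or.inr (zero_lt_one.trans hx).ne'))).continuousWithinAt
  · refine (ae_restrict_iff' measurableSet_Ioi).mpr (ae_of_all _ fun x hx => ?_)
    rw [Real.norm_of_nonneg (zero_le_one.trans hx.le)]
    exact norm_mul_ofReal_cpow_le hx.le (Nat.le_ceil _) _

lemma SchwartzMap.tendsto_mul_cpow_atTop (φ : SchwartzMap ℝ ℂ) (w : ℂ) :
    Tendsto (fun x : ℝ => φ x * (x : ℂ) ^ w) atTop (𝓝 0) := by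
  set m := ⌈w.re⌉₊
  set S := SchwartzMap.seminorm ℝ (m + 1) 0 φ
  have hlim : Tendsto (fun x : ℝ => S * x⁻¹) atTop (𝓝 0) := by
    simpa using tendsto_inv_atTop_zero.const_mul S
  refine squeeze_zero_norm' ?_ hlim
  filter_upwards [eventually_ge_atTop 1] with x hx
  have hx0 : 0 < x := zero_lt_one.trans_le hx
  calc ‖φ x * (x : ℂ) ^ w‖ ≤ x ^ m * ‖φ x‖ := norm_mul_ofReal_cpow_le hx (Nat.le_ceil _) _
    _ = (‖x‖ ^ (m + 1) * ‖φ x‖) * x⁻¹ := by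
        rw [Real.norm_of_nonneg hx0.le, pow_succ]; field_simp
    _ ≤ S * x⁻¹ := by gcongr; exact φ.norm_pow_mul_le_seminorm ℝ (m + 1) x

lemma hasDerivAt_mul_ofReal_cpow {f : ℝ → ℂ} {f' : ℂ} {x : ℝ} (hf : HasDerivAt f f' x)
    (hx : 0 < x) (s : ℂ) :
    HasDerivAt (fun y : ℝ => f y * (y : ℂ) ^ s) (f' * x ^ s + s * (f x * x ^ (s - 1))) x := by
  have hcpow := ((hasDerivAt_id (x : ℂ)).cpow_const (c := s)
    (ofReal_mem_slitPlane.mpr hx)).comp_ofReal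
  exact (hf.mul hcpow).congr_deriv (by simp only [id, mul_one]; ring)

section IntegrationByParts

variable {f f' : ℝ → ℂ} {s : ℂ}

lemma mul_integral_Ioc_mul_cpow (hf : ∀ x ∈ Ioi (0 : ℝ), HasDerivAt f (f' x) x)
    (hint : IntegrableOn (fun x : ℝ => f x * (x : ℂ) ^ (s - 1)) (Ioc 0 1))
    (hint' : IntegrableOn (fun x : ℝ => f' x * (x : ℂ) ^ s) (Ioc 0 1))
    (hzero : Tendsto (fun x : ℝ => f x * (x : ℂ) ^ s) (𝓝[>] 0) (𝓝 0)) :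
    s * ∫ x in Ioc (0 : ℝ) 1, f x * (x : ℂ) ^ (s - 1) =
      f 1 - ∫ x in Ioc (0 : ℝ) 1, f' x * (x : ℂ) ^ s := by
  have hderiv := fun x (hx : 0 < x) => hasDerivAt_mul_ofReal_cpow (hf x hx) hx s
  have hsum := hint'.add (hint.const_mul s)
  have hftc := intervalIntegral.integral_eq_sub_of_hasDerivAt_of_tendsto zero_lt_one
    (fun x hx => hderiv x hx.1)
    ((intervalIntegrable_iff_integrableOn_Ioc_of_le zero_le_one).mpr hsum) hzero
    (hderiv 1 one_pos).continuousAt.continuousWithinAt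
  rw [intervalIntegral.integral_of_le zero_le_one, integral_add hint' (hint.const_mul s),
    integral_const_mul] at hftc
  simp only [ofReal_one, one_cpow, mul_one, sub_zero] at hftc
  linear_combination hftc

lemma mul_integral_Ioi_mul_cpow (hf : ∀ x ∈ Ioi (0 : ℝ), HasDerivAt f (f' x) x)
    (hint : IntegrableOn (fun x : ℝ => f x * (x : ℂ) ^ (s - 1)) (Ioi 1))
    (hint' : IntegrableOn (fun x : ℝ => f' x * (x : ℂ) ^ s) (Ioi 1))
    (htop : Tendsto (fun x : ℝ => f x * (x : ℂ) ^ s) atTop (𝓝 0)) :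
    s * ∫ x in Ioi (1 : ℝ), f x * (x : ℂ) ^ (s - 1) =
      -f 1 - ∫ x in Ioi (1 : ℝ), f' x * (x : ℂ) ^ s := by
  have hderiv := fun x (hx : 0 < x) => hasDerivAt_mul_ofReal_cpow (hf x hx) hx s
  have hftc := integral_Ioi_of_hasDerivAt_of_tendsto
    (hderiv 1 one_pos).continuousAt.continuousWithinAt
    (fun x hx => hderiv x (zero_lt_one.trans hx)) (hint'.add (hint.const_mul s)) htop
  rw [integral_add hint' (hint.const_mul s), integral_const_mul] at hftc
  simp only [ofReal_one, one_cpow, mul_one, zero_sub] at hftc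
  linear_combination hftc

end IntegrationByParts

lemma mul_sum_taylorCoeff_div (f : ℝ → ℂ) {N : ℕ} {s : ℂ} (hs : ∀ n < N, s + n ≠ 0) :
    s * ∑ n ∈ range N, taylorCoeff f n / (s + n) =
      ∑ n ∈ range N, taylorCoeff f n -
        ∑ n ∈ range (N - 1), taylorCoeff (deriv f) n / (s + 1 + n) := by
  have hterm : ∀ n ∈ range N, s * (taylorCoeff f n / (s + n)) =
      taylorCoeff f n - n * (taylorCoeff f n / (s + n)) := fun n hn => by
    field_simp [hs n (mem_range.mp hn)]
    ring
  rw [mul_sum, sum_congr rfl hterm, sum_sub_distrib]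
  congr 1
  cases N with
  | zero => simp
  | succ M =>
    rw [sum_range_succ', Nat.add_sub_cancel]
    simp only [Nat.cast_zero, zero_mul, add_zero, taylorCoeff_deriv]
    refine sum_congr rfl fun n _ => ?_
    push_cast
    ring_nf

lemma natCast_sub_one_add_re_add_one_pos {N : ℕ} {s : ℂ} (h : 0 < N + s.re) :
    0 < ((N - 1 : ℕ) : ℝ) + (s + 1).re := by
  cases N with
  | zero => simp at h ⊢; linarith
  | succ M => simp at h ⊢; linarith

lemma mul_mellinCont (φ : SchwartzMap ℝ ℂ) {N : ℕ} {s : ℂ} (hre : 0 < N + s.re)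
    (hs : ∀ n < N, s + n ≠ 0) :
    s * mellinCont φ N s = -mellinCont (SchwartzMap.derivCLM ℝ ℂ φ) (N - 1) (s + 1) := by
  have hre' := natCast_sub_one_add_re_add_one_pos hre
  have hint' :=
    integrableOn_taylorRemainder_mul_cpow ((SchwartzMap.derivCLM ℝ ℂ φ).smooth _) hre'
  rw [add_sub_cancel_right] at hint'
  have hIoc := mul_integral_Ioc_mul_cpow
    (fun x _ => hasDerivAt_taylorRemainder φ.differentiableAt N)
    (integrableOn_taylorRemainder_mul_cpow (φ.smooth _) hre) hint'
    (tendsto_taylorRemainder_mul_cpow (φ.smooth _) hre)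
  have hIoi := mul_integral_Ioi_mul_cpow (fun x _ => φ.hasDerivAt x)
    (φ.integrableOn_Ioi_one_mul_cpow (s - 1))
    ((SchwartzMap.derivCLM ℝ ℂ φ).integrableOn_Ioi_one_mul_cpow s)
    (φ.tendsto_mul_cpow_atTop s)
  have hsum := mul_sum_taylorCoeff_div φ hs
  have hR1 : taylorRemainder φ N 1 = φ 1 - ∑ n ∈ range N, taylorCoeff φ n := by
    simp [taylorRemainder]
  have hφ' : ⇑(SchwartzMap.derivCLM ℝ ℂ φ) = deriv φ := rfl
  simp only [mellinCont, add_sub_cancel_right, hφ']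
  linear_combination hIoc + hsum + hIoi + hR1

lemma prod_mul_mellinCont (k : ℕ) (φ : SchwartzMap ℝ ℂ) {N : ℕ} {s : ℂ} (hre : 0 < N + s.re)
    (hs : ∀ n < N, s + n ≠ 0) :
    (∏ j ∈ range k, (s + j)) * mellinCont φ N s =
      (-1) ^ k * mellinCont ((SchwartzMap.derivCLM ℝ ℂ)^[k] φ) (N - k) (s + k) := by
  induction k generalizing φ N s with
  | zero => simp
  | succ k ih =>
    have hre' := natCast_sub_one_add_re_add_one_pos hre
    have hs' : ∀ n < N - 1, s + 1 + n ≠ 0 := fun n hn => by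
      simpa [add_assoc, add_comm (1 : ℂ)] using hs (n + 1) (by omega)
    rw [prod_range_succ', Nat.cast_zero, add_zero, mul_assoc, mul_mellinCont φ hre hs, mul_neg]
    simp only [Nat.cast_succ, ← add_assoc, add_right_comm s _ (1 : ℂ)]
    rw [ih _ hre' hs', Function.iterate_succ_apply, Nat.sub_sub, add_comm 1 k, pow_succ]
    ring

lemma norm_mellinCont_zero_le (f : ℝ → ℂ) (s : ℂ) :
    ‖mellinCont f 0 s‖ ≤ (∫ x in Ioc (0 : ℝ) 1, ‖f x‖ * x ^ (s.re - 1)) +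
      ∫ x in Ioi (1 : ℝ), ‖f x‖ * x ^ (s.re - 1) := by
  have hnorm : ∀ x : ℝ, 0 < x → ‖f x * (x : ℂ) ^ (s - 1)‖ = ‖f x‖ * x ^ (s.re - 1) :=
    fun x hx => by rw [norm_mul, norm_cpow_eq_rpow_re_of_pos hx, sub_re, one_re]
  simp only [mellinCont, taylorRemainder, range_zero, sum_empty, sub_zero, add_zero]
  refine (norm_add_le _ _).trans (add_le_add ?_ ?_)
  · refine (norm_integral_le_integral_norm _).trans_eq
      (setIntegral_congr_fun measurableSet_Ioc fun x hx => hnorm x hx.1)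
  · refine (norm_integral_le_integral_norm _).trans_eq
      (setIntegral_congr_fun measurableSet_Ioi fun x hx => hnorm x (zero_lt_one.trans hx))

lemma prod_abs_re_add_le_prod_norm (s : ℂ) (k : ℕ) :
    ∏ j ∈ range k, |s.re + j| ≤ ∏ j ∈ range k, ‖s + j‖ :=
  prod_le_prod (fun _ _ => abs_nonneg _) fun j _ => by
    simpa using abs_re_le_norm (s + j)

lemma abs_im_pow_le_prod_norm (s : ℂ) (k : ℕ) : |s.im| ^ k ≤ ∏ j ∈ range k, ‖s + j‖ :=
  calc |s.im| ^ k = ∏ _j ∈ range k, |s.im| := by rw [prod_const, card_range]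
    _ ≤ ∏ j ∈ range k, ‖s + j‖ := prod_le_prod (fun _ _ => abs_nonneg _) fun j _ => by
      simpa using abs_im_le_norm (s + j)

lemma abs_pow_mul_le_of_mul_le {t g P d B : ℝ} {α k : ℕ} (hαk : α ≤ k) (hd : 0 < d)
    (hdP : d ≤ P) (htP : |t| ^ k ≤ P) (hg : 0 ≤ g) (hPg : P * g ≤ B) :
    |t| ^ α * g ≤ (d⁻¹ + 1) * B := by
  have hpow : |t| ^ α ≤ (d⁻¹ + 1) * P :=
    calc |t| ^ α ≤ 1 + |t| ^ k := by
          rcases le_total |t| 1 with ht | ht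
          · linarith [pow_le_one₀ (n := α) (abs_nonneg t) ht, pow_nonneg (abs_nonneg t) k]
          · linarith [pow_le_pow_right₀ ht hαk]
      _ ≤ d⁻¹ * P + P := by gcongr; rw [inv_mul_eq_div, one_le_div hd]; exact hdP
      _ = (d⁻¹ + 1) * P := by ring
  calc |t| ^ α * g ≤ (d⁻¹ + 1) * P * g := by gcongr
    _ ≤ (d⁻¹ + 1) * B := by rw [mul_assoc]; gcongr

theorem mellin_schwartz_continuation_decay_general (φ : SchwartzMap ℝ ℂ) (c : ℝ)
    (hci : ∀ n : ℤ, c ≠ (n : ℝ)) (N : ℕ) (hN : 0 < (N : ℝ) + c)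
    (α : ℕ) :
    let a : ℕ → ℂ := fun n => iteratedDeriv n (⇑φ) 0 / (n.factorial : ℂ)
    let G : ℂ → ℂ := fun s =>
      (∫ x in Ioc (0 : ℝ) 1,
          (φ x - ∑ n ∈ range N, a n * (x : ℂ) ^ n) * (x : ℂ) ^ (s - 1)) +
        (∑ n ∈ range N, a n / (s + (n : ℂ))) +
        ∫ x in Ioi (1 : ℝ), φ x * (x : ℂ) ^ (s - 1)
    ∃ C : ℝ, ∀ t : ℝ, |t| ^ α * ‖G ((c : ℂ) + (t : ℂ) * Complex.I)‖ ≤ C := by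
  intro a G
  set k := N + α
  have hck : ∀ j : ℕ, c + j ≠ 0 := fun j h => hci (-j) (by push_cast; linarith)
  set ψ := (SchwartzMap.derivCLM ℝ ℂ)^[k] φ
  set B := (∫ x in Ioc (0 : ℝ) 1, ‖ψ x‖ * x ^ (c + k - 1)) +
    ∫ x in Ioi (1 : ℝ), ‖ψ x‖ * x ^ (c + k - 1)
  refine ⟨((∏ j ∈ range k, |c + j|)⁻¹ + 1) * B, fun t => ?_⟩
  set s : ℂ := c + t * I
  have hs : ∀ n : ℕ, s + n ≠ 0 := fun n h => hck n (by simpa [s] using congr_arg re h)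
  have hprod := prod_mul_mellinCont k φ (by simpa [s] using hN) fun n _ => hs n
  rw [Nat.sub_eq_zero_of_le (Nat.le_add_right N α)] at hprod
  have hbound : (∏ j ∈ range k, ‖s + j‖) * ‖G s‖ ≤ B := by
    rw [← norm_prod, ← norm_mul]
    refine (congr_arg norm hprod).trans_le ?_
    simpa [s] using norm_mellinCont_zero_le _ (s + k)
  exact abs_pow_mul_le_of_mul_le (Nat.le_add_left α N)
    (prod_pos fun j _ => abs_pos.mpr (hck j))
    (by simpa [s] using prod_abs_re_add_le_prod_norm s k)
    (by simpa [s] using abs_im_pow_le_prod_norm s k) (norm_nonneg _) hbound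

/-- for a Schwartz function `φ`, a negative non-integer `c`, and
`N ∈ ℕ` with `N + c > 0`, the continuation `G_N` of the Mellin transform
satisfies `sup_{t∈ℝ} |t^α · G_N(c+it)| < ∞` for every `α ∈ ℕ`. -/
theorem mellin_schwartz_continuation_decay (φ : SchwartzMap ℝ ℂ) (c : ℝ)
    (hc : c < 0) (hci : ∀ n : ℤ, c ≠ (n : ℝ)) (N : ℕ) (hN : 0 < (N : ℝ) + c)
    (α : ℕ) :
    let a : ℕ → ℂ := fun n => iteratedDeriv n (⇑φ) 0 / (n.factorial : ℂ)
    let G : ℂ → ℂ := fun s =>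
      (∫ x in Ioc (0 : ℝ) 1,
          (φ x - ∑ n ∈ range N, a n * (x : ℂ) ^ n) * (x : ℂ) ^ (s - 1)) +
        (∑ n ∈ range N, a n / (s + (n : ℂ))) +
        ∫ x in Ioi (1 : ℝ), φ x * (x : ℂ) ^ (s - 1)
    ∃ C : ℝ, ∀ t : ℝ, |t| ^ α * ‖G ((c : ℂ) + (t : ℂ) * Complex.I)‖ ≤ C :=
  mellin_schwartz_continuation_decay_general φ c hci N hN α
end

section
/- Let φ : ℝ → ℂ be a Schwartz function, let c be a negative real number that is not an integer, and let N ∈ ℕ satisfy N + c > 0. With a_n = φ^{(n)}(0)/n! and G_N(s) = ∫₀¹ (φ(x) − Σ_{n=0}^{N−1} a_n x^n) x^{s−1} dx + Σ_{n=0}^{N−1} a_n/(s+n) + ∫₁^∞ φ(x) x^{s−1} dx, one has G_N(c+it) → 0 as |t| → ∞ (Riemann–Lebesgue lemma for the analytically continued Mellin transform). -/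
/-!
Splitting at `x = 1`, the two integrals in `G_N(s)` together form the Mellin transform of
`ψ = φ - 1_{x ≤ 1} · ∑_{n<N} a_n xⁿ`. By Taylor's theorem `ψ = O(x^N)` at `0`, and `ψ = φ` decays
rapidly at `∞`, so this Mellin integral converges absolutely on `Re s = c` because `N + c > 0`.
The substitution `x = e^{-u}` turns a Mellin transform along a vertical line into a Fourier
transform, which tends to `0` by the Riemann–Lebesgue lemma; the finitely many pole terms
`a_n / (s + n)` tend to `0` as well.
-/

open MeasureTheory Complex Set Finset Filter
open Asymptotics Topology

section Mellin

variable {E : Type*} [NormedAddCommGroup E] [NormedSpace ℂ E]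

/-- Valid for every `f`: where the Mellin integral diverges, `mellin f` is the junk value `0` on
the whole line `Re s = σ`. -/
theorem tendsto_mellin_vertical_cocompact [CompleteSpace E] (f : ℝ → E) (σ : ℝ) :
    Tendsto (fun t : ℝ => mellin f (σ + t * I)) (cocompact ℝ) (𝓝 0) := by
  have hscale : Tendsto (fun t : ℝ => t / (2 * Real.pi)) (cocompact ℝ) (cocompact ℝ) :=
    (Homeomorph.mulRight₀ _ (inv_ne_zero Real.two_pi_pos.ne')).map_cocompact.le
  simpa [mellin_eq_fourier, Function.comp_def] using (Real.zero_at_infty_fourier _).comp hscale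

theorem mellin_eq_setIntegral_Ioc_add_setIntegral_Ioi {f : ℝ → E} {s : ℂ}
    (hf : MellinConvergent f s) :
    mellin f s = (∫ t : ℝ in Ioc 0 1, (t : ℂ) ^ (s - 1) • f t) +
      ∫ t : ℝ in Ioi 1, (t : ℂ) ^ (s - 1) • f t := by
  rw [mellin, ← Ioc_union_Ioi_eq_Ioi zero_le_one]
  rw [MellinConvergent, ← Ioc_union_Ioi_eq_Ioi zero_le_one] at hf
  exact setIntegral_union Ioc_disjoint_Ioi_same measurableSet_Ioi hf.left_of_union
    hf.right_of_union

theorem mellinConvergent_sub_indicator_Iic_one {f p : ℝ → E} (hf : Continuous f)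
    (hp : Continuous p) {s : ℂ} {a b : ℝ} (hf_top : f =O[atTop] (· ^ (-a))) (hs_top : s.re < a)
    (hfp_bot : (fun x => f x - p x) =O[𝓝[>] 0] (· ^ (-b))) (hs_bot : b < s.re) :
    MellinConvergent (fun x => f x - (Set.Iic 1).indicator p x) s := by
  refine mellinConvergent_of_isBigO_rpow ?_ ?_ hs_top ?_ hs_bot
  · exact (hf.locallyIntegrable.sub
      (hp.locallyIntegrable.indicator measurableSet_Iic)).locallyIntegrableOn _
  · refine hf_top.congr' ?_ .rfl
    filter_upwards [eventually_gt_atTop 1] with x hx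
    rw [indicator_of_notMem (notMem_Iic.2 hx), sub_zero]
  · refine hfp_bot.congr' ?_ .rfl
    filter_upwards [nhdsWithin_le_nhds (Iic_mem_nhds one_pos)] with x hx
    rw [indicator_of_mem hx]

theorem mellin_sub_indicator_Iic_one {f p : ℝ → E} {s : ℂ}
    (hf : MellinConvergent (fun x => f x - (Set.Iic 1).indicator p x) s) :
    mellin (fun x => f x - (Set.Iic 1).indicator p x) s =
      (∫ x : ℝ in Ioc 0 1, (x : ℂ) ^ (s - 1) • (f x - p x)) +
        ∫ x : ℝ in Ioi 1, (x : ℂ) ^ (s - 1) • f x := by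
  rw [mellin_eq_setIntegral_Ioc_add_setIntegral_Ioi hf]
  congr 1
  · refine setIntegral_congr_fun measurableSet_Ioc fun x hx => ?_
    rw [indicator_of_mem (Ioc_subset_Iic_self hx)]
  · refine setIntegral_congr_fun measurableSet_Ioi fun x hx => ?_
    rw [indicator_of_notMem (notMem_Iic.2 hx), sub_zero]

end Mellin

theorem tendsto_inv_vertical_cocompact (σ : ℝ) :
    Tendsto (fun t : ℝ => ((σ : ℂ) + t * I)⁻¹) (cocompact ℝ) (𝓝 0) := by
  refine tendsto_inv₀_cobounded.comp (tendsto_norm_atTop_iff_cobounded.mp ?_)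
  refine tendsto_atTop_mono (fun t => ?_) tendsto_norm_cocompact_atTop
  simpa using abs_im_le_norm ((σ : ℂ) + t * I)

theorem SchwartzMap.isBigO_atTop_rpow {F : Type*} [NormedAddCommGroup F] [NormedSpace ℝ F]
    (φ : SchwartzMap ℝ F) (a : ℝ) : φ =O[atTop] (· ^ a) := by
  refine ((φ.isBigO_cocompact_rpow a).mono atTop_le_cocompact).congr' .rfl ?_
  filter_upwards [eventually_ge_atTop 0] with x hx
  rw [Real.norm_of_nonneg hx]

theorem isBigO_sub_sum_taylor {F : Type*} [NormedAddCommGroup F] [NormedSpace ℝ F]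
    {f : ℝ → F} {N : ℕ} (hf : ContDiff ℝ N f) :
    (fun x => f x - ∑ k ∈ range N, ((k.factorial : ℝ)⁻¹ * x ^ k) • iteratedDeriv k f 0)
      =O[𝓝 0] (· ^ N) := by
  have h := (taylor_isLittleO_univ (x₀ := 0) hf).isBigO
  simp only [taylor_within_apply, sub_zero, iteratedDerivWithin_univ, sum_range_succ] at h
  have hlast : (fun x : ℝ => ((N.factorial : ℝ)⁻¹ * x ^ N) • iteratedDeriv N f 0)
      =O[𝓝 0] (· ^ N) := by
    refine .of_bound ((N.factorial : ℝ)⁻¹ * ‖iteratedDeriv N f 0‖) (.of_forall fun x => ?_)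
    rw [norm_smul, norm_mul, norm_inv, Real.norm_natCast]
    exact (mul_right_comm _ _ _).le
  simpa [sub_add_eq_sub_sub] using h.add hlast

theorem mellin_schwartz_riemann_lebesgue_general (φ : SchwartzMap ℝ ℂ) (c : ℝ)
    (N : ℕ) (hN : 0 < (N : ℝ) + c) :
    let a : ℕ → ℂ := fun n => iteratedDeriv n (⇑φ) 0 / (n.factorial : ℂ)
    let G : ℂ → ℂ := fun s =>
      (∫ x in Ioc (0 : ℝ) 1,
          (φ x - ∑ n ∈ range N, a n * (x : ℂ) ^ n) * (x : ℂ) ^ (s - 1)) +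
        (∑ n ∈ range N, a n / (s + (n : ℂ))) +
        ∫ x in Ioi (1 : ℝ), φ x * (x : ℂ) ^ (s - 1)
    Tendsto (fun t : ℝ => G ((c : ℂ) + (t : ℂ) * Complex.I)) (cocompact ℝ)
      (nhds 0) := by
  intro a G
  set P : ℝ → ℂ := fun x => ∑ n ∈ range N, a n * (x : ℂ) ^ n
  set ψ : ℝ → ℂ := fun x => φ x - (Set.Iic 1).indicator P x
  have hP : Continuous P := by fun_prop
  have htaylor : (fun x => φ x - P x) =O[𝓝[>] 0] (· ^ (-(-N : ℝ))) := by
    refine ((isBigO_sub_sum_taylor (φ.smooth N)).mono nhdsWithin_le_nhds).congr' ?_ ?_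
    · refine .of_forall fun x => ?_
      simp only [P, a]
      congr 1
      refine sum_congr rfl fun k _ => ?_
      rw [Complex.real_smul]
      push_cast
      ring
    · exact .of_forall fun x => by simp only [neg_neg, Real.rpow_natCast]
  have hconv (t : ℝ) : MellinConvergent ψ (c + t * I) :=
    mellinConvergent_sub_indicator_Iic_one φ.continuous hP (φ.isBigO_atTop_rpow _)
      (by simp : (c + t * I).re < c + 1) htaylor (by simp; linarith)
  have hG (t : ℝ) : G (c + t * I) =
      mellin ψ (c + t * I) + ∑ n ∈ range N, a n / (c + t * I + n) := by
    rw [mellin_sub_indicator_Iic_one (hconv t), add_right_comm]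
    simp only [G, P, smul_eq_mul]
    simp_rw [mul_comm ((_ : ℂ) ^ ((c : ℂ) + t * I - 1))]
  have hpoles : Tendsto (fun t : ℝ => ∑ n ∈ range N, a n / (c + t * I + n))
      (cocompact ℝ) (𝓝 0) := by
    simpa [div_eq_mul_inv, add_right_comm] using tendsto_finsetSum _ fun (n : ℕ) _ =>
      (tendsto_inv_vertical_cocompact (c + n)).const_mul (a n)
  simpa [hG] using (tendsto_mellin_vertical_cocompact ψ c).add hpoles

/-- Riemann–Lebesgue for the continued Mellin transform: for a
Schwartz function `φ`, a negative non-integer `c`, and `N ∈ ℕ` with `N + c > 0`,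
`G_N(c+it) → 0` as `|t| → ∞`. -/
theorem mellin_schwartz_riemann_lebesgue (φ : SchwartzMap ℝ ℂ) (c : ℝ)
    (hc : c < 0) (hci : ∀ n : ℤ, c ≠ (n : ℝ)) (N : ℕ) (hN : 0 < (N : ℝ) + c) :
    let a : ℕ → ℂ := fun n => iteratedDeriv n (⇑φ) 0 / (n.factorial : ℂ)
    let G : ℂ → ℂ := fun s =>
      (∫ x in Ioc (0 : ℝ) 1,
          (φ x - ∑ n ∈ range N, a n * (x : ℂ) ^ n) * (x : ℂ) ^ (s - 1)) +
        (∑ n ∈ range N, a n / (s + (n : ℂ))) +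
        ∫ x in Ioi (1 : ℝ), φ x * (x : ℂ) ^ (s - 1)
    Tendsto (fun t : ℝ => G ((c : ℂ) + (t : ℂ) * Complex.I)) (cocompact ℝ)
      (nhds 0) :=
  mellin_schwartz_riemann_lebesgue_general φ c N hN
end

section
/- Let f : ℝ → ℂ be a Schwartz function and let c > 0. Then the function x ↦ e^{cx}·f(e^x) belongs to the Schwartz space 𝓢(ℝ,ℂ); i.e. for all n, k ∈ ℕ, sup_{x∈ℝ} |x^n · (d/dx)^k (e^{cx} f(e^x))| < ∞. -/
/-!
Under the substitution `y = e^x`, differentiation in `x` of `e^{cx} g(e^x)` becomes the operator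
`c + y d/dy` applied to `g`, which preserves Schwartz space. Hence every derivative of
`e^{cx} f(e^x)` is again of the form `e^{cx} g(e^x)` with `g` Schwartz, and such a function decays
on both sides: as `x → -∞` through the factor `e^{cx}` (this is where `c > 0` enters), and as
`x → +∞` because `g` decays faster than any power of `y = e^x`.
-/

open scoped ContDiff SchwartzMap

namespace SchwartzMap

variable {E : Type*} [NormedAddCommGroup E] [NormedSpace ℝ E]

noncomputable def weightedCompExp (c : ℝ) (g : 𝓢(ℝ, E)) (x : ℝ) : E :=
  Real.exp (c * x) • g (Real.exp x)

/-- The operator `c + y d/dy`, i.e. `d/dx` conjugated by `g ↦ weightedCompExp c g`. -/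
noncomputable def eulerOp (c : ℝ) (g : 𝓢(ℝ, E)) : 𝓢(ℝ, E) :=
  c • g + smulLeftCLM E (fun y : ℝ => y) (derivCLM ℝ E g)

theorem eulerOp_apply (c : ℝ) (g : 𝓢(ℝ, E)) (y : ℝ) :
    eulerOp c g y = c • g y + y • deriv g y := by
  simp [eulerOp, smulLeftCLM_apply_apply Function.HasTemperateGrowth.id']

theorem contDiff_weightedCompExp (c : ℝ) (g : 𝓢(ℝ, E)) :
    ContDiff ℝ ∞ (weightedCompExp c g) :=
  (Real.contDiff_exp.comp (contDiff_const.mul contDiff_id)).smul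
    ((g.smooth ⊤).comp Real.contDiff_exp)

theorem hasDerivAt_weightedCompExp (c : ℝ) (g : 𝓢(ℝ, E)) (x : ℝ) :
    HasDerivAt (weightedCompExp c g) (weightedCompExp c (eulerOp c g) x) x := by
  have hexp : HasDerivAt (fun y => Real.exp (c * y)) (Real.exp (c * x) * c) x := by
    simpa using ((hasDerivAt_id x).const_mul c).exp
  have hcomp := (g.hasDerivAt (Real.exp x)).scomp x (Real.hasDerivAt_exp x)
  refine (hexp.smul hcomp).congr_deriv ?_
  simp only [weightedCompExp, eulerOp_apply, Function.comp_apply, smul_add, smul_smul]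
  rw [add_comm, mul_comm]

theorem iteratedDeriv_weightedCompExp (c : ℝ) (n : ℕ) (g : 𝓢(ℝ, E)) :
    iteratedDeriv n (weightedCompExp c g) = weightedCompExp c ((eulerOp c)^[n] g) := by
  induction n generalizing g with
  | zero => rfl
  | succ n ih =>
    rw [iteratedDeriv_succ', Function.iterate_succ_apply, ← ih]
    congr 1
    funext x
    exact (hasDerivAt_weightedCompExp c g x).deriv

theorem abs_pow_le_mul_exp_mul_abs {c : ℝ} (hc : 0 < c) (k : ℕ) (x : ℝ) :
    |x| ^ k ≤ k.factorial / c ^ k * Real.exp (c * |x|) := by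
  have h := Real.pow_div_factorial_le_exp (x := c * |x|) (by positivity) k
  rw [div_le_iff₀ (by positivity), mul_pow] at h
  rw [div_mul_eq_mul_div, le_div_iff₀ (by positivity)]
  linarith

theorem exp_mul_abs_add_mul_le {c : ℝ} {N : ℕ} (hN : 2 * c ≤ N) (x : ℝ) :
    Real.exp (c * |x| + c * x) ≤ 1 + Real.exp x ^ N := by
  rcases le_total x 0 with hx | hx
  · rw [abs_of_nonpos hx]
    simp only [mul_neg, neg_add_cancel, Real.exp_zero, le_add_iff_nonneg_right]
    positivity
  · rw [abs_of_nonneg hx, ← Real.exp_nat_mul]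
    have : c * x + c * x ≤ N * x := by nlinarith
    linarith [Real.exp_le_exp.mpr this]

theorem abs_pow_mul_norm_weightedCompExp_le {c : ℝ} (hc : 0 < c) (k : ℕ) (g : 𝓢(ℝ, E)) :
    ∃ C, ∀ x, |x| ^ k * ‖weightedCompExp c g x‖ ≤ C := by
  set N := ⌈2 * c⌉₊
  refine ⟨k.factorial / c ^ k * (SchwartzMap.seminorm ℝ 0 0 g + SchwartzMap.seminorm ℝ N 0 g),
    fun x => ?_⟩
  have hg : (1 + Real.exp x ^ N) * ‖g (Real.exp x)‖ ≤
      SchwartzMap.seminorm ℝ 0 0 g + SchwartzMap.seminorm ℝ N 0 g := by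
    have h0 := g.norm_le_seminorm ℝ (Real.exp x)
    have hN := g.norm_pow_mul_le_seminorm ℝ N (Real.exp x)
    rw [Real.norm_of_nonneg (Real.exp_pos x).le] at hN
    linarith
  calc |x| ^ k * ‖weightedCompExp c g x‖
      = |x| ^ k * Real.exp (c * x) * ‖g (Real.exp x)‖ := by
        rw [weightedCompExp, norm_smul, Real.norm_of_nonneg (Real.exp_pos _).le, mul_assoc]
    _ ≤ k.factorial / c ^ k * Real.exp (c * |x| + c * x) * ‖g (Real.exp x)‖ := by
        rw [Real.exp_add, ← mul_assoc]
        gcongr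
        exact abs_pow_le_mul_exp_mul_abs hc k x
    _ ≤ k.factorial / c ^ k * (1 + Real.exp x ^ N) * ‖g (Real.exp x)‖ := by
        gcongr
        exact exp_mul_abs_add_mul_le (Nat.le_ceil _) x
    _ ≤ _ := by
        rw [mul_assoc]
        gcongr

noncomputable def weightedCompExpSchwartz {c : ℝ} (hc : 0 < c) (g : 𝓢(ℝ, E)) : 𝓢(ℝ, E) where
  toFun := weightedCompExp c g
  smooth' := contDiff_weightedCompExp c g
  decay' k n := by
    simp only [norm_iteratedFDeriv_eq_norm_iteratedDeriv, Real.norm_eq_abs,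
      iteratedDeriv_weightedCompExp]
    exact abs_pow_mul_norm_weightedCompExp_le hc k _

end SchwartzMap

/-- for a Schwartz function `f` and `c > 0`, the function
`x ↦ e^{cx}·f(e^x)` belongs to the Schwartz space `𝓢(ℝ,ℂ)`. -/
theorem exp_comp_schwartz (f : SchwartzMap ℝ ℂ) (c : ℝ) (hc : 0 < c) :
    ∃ g : SchwartzMap ℝ ℂ, ∀ x : ℝ,
      g x = Real.exp (c * x) • f (Real.exp x) :=
  ⟨SchwartzMap.weightedCompExpSchwartz hc f, fun _ => rfl⟩
end

section
/- (Mellin inversion formula) Let φ : ℝ → ℂ be a Schwartz function, c > 0 and x > 0. Then the integral ∫_ℝ M(φ)(c+it)·x^{−it} dt converges and φ(x) = (x^{−c}/(2π)) ∫_ℝ M(φ)(c+it) x^{−it} dt, where M(φ)(c+it) = ∫₀^∞ φ(u) u^{c+it−1} du. -/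
/-!
Under the substitution `u = e^{-v}`, the Mellin transform of `φ` on the line `Re s = c` becomes
the Fourier transform of `g(v) = e^{-cv} φ(e^{-v})` (`mellin_eq_fourier`), so Mathlib's Mellin
inversion theorem applies as soon as `t ↦ M(φ)(c + it)` is integrable. For Schwartz `φ`, the
derivatives `g'` and `g''` are linear combinations of functions of the same shape
`e^{-σv} ψ(e^{-v})` with `ψ` Schwartz and `σ > 0`, and each of these is integrable: it decays like
`e^{-σv}` as `v → ∞` because `ψ` is bounded, and exponentially as `v → -∞` because `ψ` decays
rapidly. Hence `(1 + ξ²) 𝓕g(ξ)` is bounded and `𝓕g` is integrable.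
-/

open MeasureTheory Complex Set Real Filter
open scoped FourierTransform SchwartzMap

section Fourier

variable {E : Type*} [NormedAddCommGroup E] [NormedSpace ℂ E]

theorem Real.integrable_fourier_of_integrable_deriv_deriv {f : ℝ → E} (hf : Integrable f)
    (hf' : Differentiable ℝ f) (hf'_int : Integrable (deriv f))
    (hf'' : Differentiable ℝ (deriv f)) (hf''_int : Integrable (deriv (deriv f))) :
    Integrable (𝓕 f) := by
  have hfourier : 𝓕 (deriv (deriv f)) = fun ξ : ℝ ↦ (2 * π * I * ξ) ^ 2 • 𝓕 f ξ := by
    ext ξ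
    rw [fourier_deriv hf'_int hf'' hf''_int, fourier_deriv hf hf' hf'_int]
    simp only [smul_smul, sq]
  set M := (∫ u, ‖f u‖) + ∫ u, ‖deriv (deriv f) u‖
  have hbound : ∀ ξ : ℝ, (1 + ξ ^ 2) * ‖𝓕 f ξ‖ ≤ M := by
    intro ξ
    have h₀ : ‖𝓕 f ξ‖ ≤ ∫ u, ‖f u‖ :=
      VectorFourier.norm_fourierIntegral_le_integral_norm _ _ _ _ _
    have h₂ : (2 * π) ^ 2 * (ξ ^ 2 * ‖𝓕 f ξ‖) ≤ ∫ u, ‖deriv (deriv f) u‖ :=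
      calc (2 * π) ^ 2 * (ξ ^ 2 * ‖𝓕 f ξ‖) = ‖𝓕 (deriv (deriv f)) ξ‖ := by
            rw [hfourier, norm_smul, norm_pow]
            simp only [mul_pow, Complex.norm_mul, Complex.norm_ofNat, norm_real, norm_eq_abs,
              abs_of_pos pi_pos, norm_I, mul_one, sq_abs]
            ring
        _ ≤ _ := VectorFourier.norm_fourierIntegral_le_integral_norm _ _ _ _ _
    have h2π : 1 ≤ (2 * π) ^ 2 := one_le_pow₀ (by linarith [pi_gt_three])
    nlinarith [mul_nonneg (sq_nonneg ξ) (norm_nonneg (𝓕 f ξ))]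
  refine (integrable_inv_one_add_sq.const_mul M).mono'
    (VectorFourier.fourierIntegral_continuous continuous_fourierChar continuous_inner
      hf).aestronglyMeasurable (Eventually.of_forall fun ξ ↦ ?_)
  rw [← div_eq_mul_inv, le_div_iff₀' (by positivity)]
  exact hbound ξ

end Fourier

section ExpSubst

variable {E : Type*} [NormedAddCommGroup E] [NormedSpace ℝ E]

noncomputable def expSubst (σ : ℝ) (f : ℝ → E) (u : ℝ) : E :=
  rexp (-σ * u) • f (rexp (-u))

theorem hasDerivAt_expSubst {f : ℝ → E} (hf : Differentiable ℝ f) (σ u : ℝ) :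
    HasDerivAt (expSubst σ f) (-σ • expSubst σ f u - expSubst (σ + 1) (deriv f) u) u := by
  have hexp : HasDerivAt (fun u ↦ rexp (-u)) (-rexp (-u)) u := by
    simpa using (hasDerivAt_neg u).exp
  have hweight : HasDerivAt (fun u ↦ rexp (-σ * u)) (rexp (-σ * u) * -σ) u := by
    simpa using ((hasDerivAt_id u).const_mul (-σ)).exp
  convert hweight.smul ((hf _).hasDerivAt.scomp u hexp) using 1
  · rfl
  · simp only [expSubst, Function.comp_apply]
    rw [show -(σ + 1) * u = -σ * u + -u by ring, Real.exp_add]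
    module

theorem differentiable_expSubst {f : ℝ → E} (hf : Differentiable ℝ f) (σ : ℝ) :
    Differentiable ℝ (expSubst σ f) :=
  fun u ↦ (hasDerivAt_expSubst hf σ u).differentiableAt

theorem deriv_expSubst {f : ℝ → E} (hf : Differentiable ℝ f) (σ : ℝ) :
    deriv (expSubst σ f) = -σ • expSubst σ f - expSubst (σ + 1) (deriv f) :=
  funext fun u ↦ (hasDerivAt_expSubst hf σ u).deriv

namespace SchwartzMap

theorem norm_expSubst_le (ψ : 𝓢(ℝ, E)) (σ : ℝ) (k : ℕ) :
    ∃ C, ∀ u, ‖expSubst σ ψ u‖ ≤ C * rexp ((k - σ) * u) := by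
  obtain ⟨C, -, hC⟩ := ψ.decay k 0
  refine ⟨C, fun u ↦ ?_⟩
  have h := hC (rexp (-u))
  rw [norm_iteratedFDeriv_zero, norm_of_nonneg (exp_pos _).le, ← Real.exp_nat_mul] at h
  rw [expSubst, norm_smul, norm_of_nonneg (exp_pos _).le]
  calc rexp (-σ * u) * ‖ψ (rexp (-u))‖
      = rexp ((k - σ) * u) * (rexp (k * -u) * ‖ψ (rexp (-u))‖) := by
        rw [← mul_assoc, ← Real.exp_add]; ring_nf
    _ ≤ rexp ((k - σ) * u) * C := by gcongr
    _ = C * rexp ((k - σ) * u) := mul_comm _ _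

theorem integrable_expSubst (ψ : 𝓢(ℝ, E)) {σ : ℝ} (hσ : 0 < σ) :
    Integrable (expSubst σ ψ) := by
  have hcont : Continuous (expSubst σ ψ) := by unfold expSubst; fun_prop
  obtain ⟨C₀, hC₀⟩ := ψ.norm_expSubst_le σ 0
  obtain ⟨C, hC⟩ := ψ.norm_expSubst_le σ (⌈σ⌉₊ + 1)
  rw [← integrableOn_univ, ← Iic_union_Ioi (a := 0)]
  refine IntegrableOn.union ?_ ?_
  · refine Integrable.mono' ((integrableOn_exp_mul_Iic ?_ 0).const_mul C)
      hcont.aestronglyMeasurable.restrict (Eventually.of_forall hC)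
    push_cast
    linarith [Nat.le_ceil σ]
  · exact Integrable.mono' ((integrableOn_exp_mul_Ioi (by simpa using hσ) 0).const_mul C₀)
      hcont.aestronglyMeasurable.restrict (Eventually.of_forall hC₀)

theorem differentiable_expSubst (ψ : 𝓢(ℝ, E)) (σ : ℝ) : Differentiable ℝ (expSubst σ ψ) :=
  _root_.differentiable_expSubst ψ.differentiable σ

theorem deriv_expSubst (ψ : 𝓢(ℝ, E)) (σ : ℝ) :
    deriv (expSubst σ ψ) = -σ • expSubst σ ψ - expSubst (σ + 1) (derivCLM ℝ E ψ) :=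
  _root_.deriv_expSubst ψ.differentiable σ

theorem integrable_deriv_expSubst (ψ : 𝓢(ℝ, E)) {σ : ℝ} (hσ : 0 < σ) :
    Integrable (deriv (expSubst σ ψ)) := by
  rw [ψ.deriv_expSubst σ]
  exact ((ψ.integrable_expSubst hσ).smul (-σ)).sub
    ((derivCLM ℝ E ψ).integrable_expSubst (by linarith))

theorem differentiable_deriv_expSubst (ψ : 𝓢(ℝ, E)) (σ : ℝ) :
    Differentiable ℝ (deriv (expSubst σ ψ)) := by
  rw [ψ.deriv_expSubst σ]
  exact ((ψ.differentiable_expSubst σ).const_smul (-σ)).sub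
    ((derivCLM ℝ E ψ).differentiable_expSubst (σ + 1))

theorem integrable_deriv_deriv_expSubst (ψ : 𝓢(ℝ, E)) {σ : ℝ} (hσ : 0 < σ) :
    Integrable (deriv (deriv (expSubst σ ψ))) := by
  have hderiv : deriv (-σ • expSubst σ ψ - expSubst (σ + 1) (derivCLM ℝ E ψ)) =
      -σ • deriv (expSubst σ ψ) - deriv (expSubst (σ + 1) (derivCLM ℝ E ψ)) :=
    funext fun u ↦ ((((ψ.differentiable_expSubst σ) u).hasDerivAt.const_smul (-σ)).sub
      ((derivCLM ℝ E ψ).differentiable_expSubst (σ + 1) u).hasDerivAt).deriv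
  rw [ψ.deriv_expSubst σ, hderiv]
  exact ((ψ.integrable_deriv_expSubst hσ).smul (-σ)).sub
    ((derivCLM ℝ E ψ).integrable_deriv_expSubst (by linarith))

end SchwartzMap

end ExpSubst

section Mellin

variable {E : Type*} [NormedAddCommGroup E] [NormedSpace ℂ E]

theorem mellin_eq_fourier_expSubst (f : ℝ → E) (s : ℂ) :
    mellin f s = 𝓕 (expSubst s.re f) (s.im / (2 * π)) :=
  mellin_eq_fourier f

namespace SchwartzMap

theorem mellinConvergent (ψ : 𝓢(ℝ, E)) {s : ℂ} (hs : 0 < s.re) : MellinConvergent ψ s := by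
  refine mellinConvergent_of_isBigO_rpow (a := s.re + 1) (b := 0)
    (ψ.continuous.locallyIntegrable.locallyIntegrableOn _) ?_ (lt_add_one _) ?_ hs
  · refine ((ψ.isBigO_cocompact_rpow (-(s.re + 1))).mono atTop_le_cocompact).congr' .rfl ?_
    filter_upwards [eventually_ge_atTop 0] with x hx
    rw [norm_of_nonneg hx]
  · simpa using ((ψ.continuous.tendsto 0).isBigO_one ℝ).mono nhdsWithin_le_nhds

theorem verticalIntegrable_mellin (ψ : 𝓢(ℝ, E)) {σ : ℝ} (hσ : 0 < σ) :
    VerticalIntegrable (mellin ψ) σ := by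
  have hF : Integrable (𝓕 (expSubst σ ψ)) :=
    Real.integrable_fourier_of_integrable_deriv_deriv (ψ.integrable_expSubst hσ)
      (ψ.differentiable_expSubst σ) (ψ.integrable_deriv_expSubst hσ)
      (ψ.differentiable_deriv_expSubst σ) (ψ.integrable_deriv_deriv_expSubst hσ)
  refine (hF.comp_mul_right' (R := (2 * π)⁻¹) (by positivity)).congr
    (Eventually.of_forall fun t ↦ ?_)
  simp [mellin_eq_fourier_expSubst, div_eq_mul_inv]

end SchwartzMap

end Mellin

theorem Complex.VerticalIntegrable.integrable_mul_cpow_neg_mul_I {f : ℂ → ℂ} {σ : ℝ}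
    (hf : VerticalIntegrable f σ) {x : ℝ} (hx : 0 < x) :
    Integrable fun t : ℝ ↦ f (σ + t * I) * (x : ℂ) ^ (-(t * I)) := by
  have hcont : Continuous fun t : ℝ ↦ (x : ℂ) ^ (-(t * I)) :=
    (by fun_prop : Continuous fun t : ℝ ↦ -(t * I)).const_cpow (.inl (ofReal_ne_zero.mpr hx.ne'))
  refine hf.mul_bdd (c := 1) hcont.aestronglyMeasurable (Eventually.of_forall fun t ↦ ?_)
  simp [norm_cpow_eq_rpow_re_of_pos hx]

theorem mellinInv_eq_mul_integral (σ : ℝ) (f : ℂ → ℂ) {x : ℝ} (hx : 0 < x) :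
    mellinInv σ f x =
      ((x ^ (-σ) / (2 * π) : ℝ) : ℂ) * ∫ t : ℝ, f (σ + t * I) * (x : ℂ) ^ (-(t * I)) := by
  have hx₀ : (x : ℂ) ≠ 0 := ofReal_ne_zero.mpr hx.ne'
  rw [mellinInv, real_smul, ← integral_const_mul, ← integral_const_mul]
  congr 1 with t
  rw [neg_add, cpow_add _ _ hx₀, smul_eq_mul]
  push_cast [ofReal_cpow hx.le]
  ring

/-- Mellin inversion formula: for a Schwartz function `φ`, `c > 0`
and `x > 0`, the integral `∫_ℝ M(φ)(c+it)·x^{−it} dt` converges and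
`φ(x) = (x^{−c}/(2π)) ∫_ℝ M(φ)(c+it) x^{−it} dt`. -/
theorem mellin_inversion_schwartz (φ : SchwartzMap ℝ ℂ) (c : ℝ) (hc : 0 < c)
    (x : ℝ) (hx : 0 < x) :
    Integrable
        (fun t : ℝ =>
          (∫ u in Ioi (0 : ℝ), φ u * (u : ℂ) ^ ((c : ℂ) + (t : ℂ) * Complex.I - 1)) *
            (x : ℂ) ^ (-((t : ℂ) * Complex.I))) ∧
      φ x =
        ((x ^ (-c) / (2 * Real.pi) : ℝ) : ℂ) *
          ∫ t : ℝ,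
            (∫ u in Ioi (0 : ℝ), φ u * (u : ℂ) ^ ((c : ℂ) + (t : ℂ) * Complex.I - 1)) *
              (x : ℂ) ^ (-((t : ℂ) * Complex.I)) := by
  have hmellin (s : ℂ) : ∫ u in Ioi (0 : ℝ), φ u * (u : ℂ) ^ (s - 1) = mellin φ s := by
    simp only [mellin, smul_eq_mul, mul_comm]
  simp_rw [hmellin]
  have hvert := φ.verticalIntegrable_mellin hc
  refine ⟨hvert.integrable_mul_cpow_neg_mul_I hx, ?_⟩
  rw [← mellinInv_eq_mul_integral c _ hx, mellinInv_mellin_eq c φ hx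
    (φ.mellinConvergent (by simpa using hc)) hvert φ.continuous.continuousAt]
end

section
/- (Three-graviton celestial bracket identity) Let f₁, f₂, f₃ : ℝ → ℂ be Schwartz functions, let α₁, α₂ > 0 and c ∈ (0,2). Then (1/(2π))² ∫_ℝ ∫_ℝ α₁^{c+1+iλ₁} α₂^{c+1+iλ₂} · M(f₁)(2−c−iλ₁) · M(f₂)(2−c−iλ₂) · M(f₃)(2c+i(λ₁+λ₂)) dλ₁ dλ₂ = α₁³ α₂³ ∫₀^∞ ω³ f₁(α₁ω) f₂(α₂ω) f₃(ω) dω, where M(h)(s) = ∫₀^∞ h(ω) ω^{s−1} dω, and all integrals converge absolutely. -/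
/-!
Substituting `ω = e^{-u}` turns the Mellin transform along `Re s = σ` into the Fourier transform
of the pullback `u ↦ e^{-σu} f(e^{-u})` (`mellin_eq_fourier`), and the factors `α^{c+1+iλ}` are
absorbed by dilating `f₁` and `f₂`. After rescaling `λ = -2πξ` the double integral becomes
`∬ 𝓕g₁(ξ₁) 𝓕g₂(ξ₂) 𝓕g₃(-ξ₁-ξ₂)`, and two applications of the convolution identity
`𝓕(φh)(ζ) = ∫ 𝓕φ(η) 𝓕h(ζ-η) dη` reduce it to `∫ g₁g₂g₃`. The weights add up to
`(2-c) + (2-c) + 2c = 4`, so this is the Mellin transform of `f₁(α₁·) f₂(α₂·) f₃` at `4`, which is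
the right-hand side. The convolution identity needs `𝓕φ` integrable: pullbacks of Schwartz
functions are `C²` with integrable derivatives, so their Fourier transforms decay like
`(1 + ξ²)⁻¹`.
-/

open MeasureTheory Complex Set
open scoped FourierTransform Real

noncomputable section

namespace MeasureTheory.Integrable

variable {E : Type*} [NormedAddCommGroup E] [NormedSpace ℂ E]

theorem continuous_fourier {g : ℝ → E} (hg : Integrable g) : Continuous (𝓕 g) :=
  VectorFourier.fourierIntegral_continuous Real.continuous_fourierChar
    (innerSL ℝ).continuous₂ hg

end MeasureTheory.Integrable

namespace Real

variable {E : Type*} [NormedAddCommGroup E] [NormedSpace ℂ E]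

theorem norm_fourier_le_integral_norm (g : ℝ → E) (ξ : ℝ) : ‖𝓕 g ξ‖ ≤ ∫ t, ‖g t‖ :=
  VectorFourier.norm_fourierIntegral_le_integral_norm _ _ _ _ _

/-- Two integrations by parts give `(1 + (2πξ)²) ‖𝓕 g ξ‖ ≤ ‖g‖₁ + ‖g''‖₁`. -/
theorem integrable_fourier_of_integrable_deriv_deriv_s17 {g : ℝ → E} (hg : Integrable g)
    (hd : Differentiable ℝ g) (hg' : Integrable (deriv g))
    (hd' : Differentiable ℝ (deriv g)) (hg'' : Integrable (deriv (deriv g))) :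
    Integrable (𝓕 g) := by
  set C := (∫ t, ‖g t‖) + ∫ t, ‖deriv (deriv g) t‖
  have hfourier'' (ξ : ℝ) : 𝓕 (deriv (deriv g)) ξ = (2 * π * I * ξ) ^ 2 • 𝓕 g ξ := by
    simp only [fourier_deriv hg' hd' hg'', fourier_deriv hg hd hg', smul_smul, sq]
  have hbound (ξ : ℝ) : ‖𝓕 g ξ‖ ≤ C * (1 + (2 * π * ξ) ^ 2)⁻¹ := by
    have h₀ := norm_fourier_le_integral_norm g ξ
    have h₂ := norm_fourier_le_integral_norm (deriv (deriv g)) ξ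
    rw [hfourier'', norm_smul, norm_pow, norm_mul, norm_mul, norm_mul, Complex.norm_I,
      Complex.norm_real, Complex.norm_real, Complex.norm_ofNat, norm_eq_abs, norm_eq_abs,
      abs_of_pos pi_pos, mul_one, mul_pow, sq_abs, ← mul_pow] at h₂
    rw [← div_eq_mul_inv, le_div_iff₀ (by positivity)]
    nlinarith
  exact ((integrable_inv_one_add_sq.comp_mul_left' (by positivity)).const_mul C).mono'
    hg.continuous_fourier.aestronglyMeasurable (ae_of_all _ hbound)

theorem integrable_fourier_smul_fourier_smul_fourier {g₁ g₂ : ℝ → ℂ} {g₃ : ℝ → E}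
    (hFg₁ : Integrable (𝓕 g₁)) (hFg₂ : Integrable (𝓕 g₂)) (hg₃ : Integrable g₃) :
    Integrable (fun ξ : ℝ × ℝ => 𝓕 g₁ ξ.1 • 𝓕 g₂ ξ.2 • 𝓕 g₃ (-ξ.1 - ξ.2)) := by
  have hprod := (hFg₁.mul_prod hFg₂).smul_bdd (f := fun ξ : ℝ × ℝ => 𝓕 g₃ (-ξ.1 - ξ.2)) _
    (by have := hg₃.continuous_fourier; fun_prop)
    (ae_of_all _ fun ξ => norm_fourier_le_integral_norm g₃ _)
  rw [Measure.volume_eq_prod]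
  exact hprod.congr (ae_of_all _ fun ξ => (smul_smul _ _ _).symm)

variable [CompleteSpace E]

theorem norm_le_integral_norm_fourier {g : ℝ → E} (hg : Integrable g) (hFg : Integrable (𝓕 g))
    (hc : Continuous g) (t : ℝ) : ‖g t‖ ≤ ∫ ξ, ‖𝓕 g ξ‖ :=
  calc ‖g t‖ = ‖𝓕 (𝓕 g) (-t)‖ := by
        rw [← fourierInv_eq_fourier_neg, hc.fourierInv_fourier_eq hg hFg]
    _ ≤ ∫ ξ, ‖𝓕 g ξ‖ := norm_fourier_le_integral_norm (𝓕 g) (-t)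

/-- Fubini, with Fourier inversion for `φ` in the inner integral. -/
theorem fourier_smul_eq_integral {φ : ℝ → ℂ} {h : ℝ → E} (hφ : Integrable φ)
    (hFφ : Integrable (𝓕 φ)) (hφc : Continuous φ) (hh : Integrable h) (ζ : ℝ) :
    𝓕 (fun t => φ t • h t) ζ = ∫ η, 𝓕 φ η • 𝓕 h (ζ - η) := by
  set K : ℝ → ℝ → E := fun η t => (𝐞 (η * t) • 𝓕 φ η) • 𝐞 (-(t * ζ)) • h t
  have hK : Integrable (Function.uncurry K) (volume.prod volume) := by
    refine ((hFφ.smul_prod hh).bdd_smul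
      (φ := fun p : ℝ × ℝ => ((𝐞 (p.1 * p.2) * 𝐞 (-(p.2 * ζ)) : Circle) : ℂ)) 1 (by fun_prop)
      (ae_of_all _ fun p => by simp [Circle.norm_coe])).congr (ae_of_all _ fun p => ?_)
    simp only [K, Function.uncurry, Pi.smul_apply', Circle.smul_def, smul_smul, Circle.coe_mul]
    ring_nf
  calc 𝓕 (fun t => φ t • h t) ζ
      = ∫ t, ∫ η, K η t := by
        rw [fourier_real_eq]
        congr 1 with t
        have hinv : ∫ η, 𝐞 (η * t) • 𝓕 φ η = φ t := by
          rw [← hφ.fourierInv_fourier_eq hFφ hφc.continuousAt, fourierInv_eq]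
          simp [mul_comm]
        rw [integral_smul_const, hinv, smul_comm]
    _ = ∫ η, ∫ t, K η t := (integral_integral_swap hK).symm
    _ = ∫ η, 𝓕 φ η • 𝓕 h (ζ - η) := by
        congr 1 with η
        rw [fourier_real_eq h, ← integral_smul]
        congr 1 with t
        rw [show -(t * (ζ - η)) = η * t + -(t * ζ) by ring, AddChar.map_add_eq_mul]
        simp only [K, Circle.smul_def, smul_smul, Circle.coe_mul]
        ring_nf

theorem integral_integral_fourier_smul_fourier_smul_fourier {g₁ g₂ : ℝ → ℂ} {g₃ : ℝ → E}
    (hg₁ : Integrable g₁) (hFg₁ : Integrable (𝓕 g₁)) (hc₁ : Continuous g₁)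
    (hg₂ : Integrable g₂) (hFg₂ : Integrable (𝓕 g₂)) (hc₂ : Continuous g₂) (hg₃ : Integrable g₃) :
    ∫ ξ₁, ∫ ξ₂, 𝓕 g₁ ξ₁ • 𝓕 g₂ ξ₂ • 𝓕 g₃ (-ξ₁ - ξ₂) = ∫ t, g₁ t • g₂ t • g₃ t := by
  have hg₂₃ : Integrable (fun t => g₂ t • g₃ t) :=
    hg₃.bdd_smul _ hc₂.aestronglyMeasurable
      (ae_of_all _ (norm_le_integral_norm_fourier hg₂ hFg₂ hc₂))
  calc ∫ ξ₁, ∫ ξ₂, 𝓕 g₁ ξ₁ • 𝓕 g₂ ξ₂ • 𝓕 g₃ (-ξ₁ - ξ₂)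
      = ∫ ξ₁, 𝓕 g₁ ξ₁ • 𝓕 (fun t => g₂ t • g₃ t) (0 - ξ₁) := by
        congr 1 with ξ₁
        rw [integral_smul, fourier_smul_eq_integral hg₂ hFg₂ hc₂ hg₃, zero_sub]
    _ = 𝓕 (fun t => g₁ t • g₂ t • g₃ t) 0 :=
        (fourier_smul_eq_integral hg₁ hFg₁ hc₁ hg₂₃ 0).symm
    _ = ∫ t, g₁ t • g₂ t • g₃ t := by simp [fourier_real_eq]

end Real

section RescaleProd

variable {E : Type*} [NormedAddCommGroup E]

theorem integrable_comp_div_prod {H : ℝ → ℝ → E} (hH : Integrable (fun p : ℝ × ℝ => H p.1 p.2))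
    {b : ℝ} (hb : b ≠ 0) : Integrable (fun p : ℝ × ℝ => H (p.1 / b) (p.2 / b)) :=
  (hH.comp_smul (inv_ne_zero hb)).congr (ae_of_all _ fun p => by simp [div_eq_inv_mul])

theorem integral_integral_comp_div [NormedSpace ℝ E] (H : ℝ → ℝ → E) (b : ℝ) :
    ∫ x, ∫ y, H (x / b) (y / b) = |b| • |b| • ∫ x, ∫ y, H x y := by
  simp_rw [Measure.integral_comp_div (H (_ / b)) b, integral_smul]
  rw [Measure.integral_comp_div (fun x => ∫ y, H x y) b]

end RescaleProd

theorem integrable_exp_neg_mul_abs {a : ℝ} (ha : 0 < a) :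
    Integrable (fun u : ℝ => Real.exp (-a * |u|)) := by
  have hone : Integrable (fun u : ℝ => Real.exp (-|u|)) := by
    rw [← integrableOn_univ, ← Iic_union_Ioi (a := 0)]
    refine IntegrableOn.union ?_ ?_
    · exact (integrableOn_exp_Iic 0).congr_fun
        (fun u (hu : u ≤ 0) => by simp [abs_of_nonpos hu]) measurableSet_Iic
    · exact (exp_neg_integrableOn_Ioi 0 one_pos).congr_fun
        (fun u (hu : 0 < u) => by simp [abs_of_pos hu]) measurableSet_Ioi
  refine (hone.comp_mul_left' ha.ne').congr (ae_of_all _ fun u => ?_)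
  simp [abs_mul, abs_of_pos ha]

theorem cpow_mul_mellin (f : ℝ → ℂ) {a : ℝ} (ha : 0 < a) (w s : ℂ) :
    (a : ℂ) ^ w * mellin f s = (a : ℂ) ^ (w + s) * mellin (fun t => f (a * t)) s := by
  rw [mellin_comp_mul_left f s ha, smul_eq_mul, ← mul_assoc,
    ← cpow_add _ _ (ofReal_ne_zero.mpr ha.ne'), add_neg_cancel_right]

theorem mellin_natCast_add_one (f : ℝ → ℂ) (n : ℕ) :
    mellin f ((n + 1 : ℝ) : ℂ) = ∫ x in Ioi (0 : ℝ), ((x ^ n : ℝ) : ℂ) * f x := by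
  simp [mellin, cpow_natCast]

def expPullback (f : ℝ → ℂ) (σ u : ℝ) : ℂ := Real.exp (-σ * u) • f (Real.exp (-u))

theorem mellin_eq_fourier_expPullback (f : ℝ → ℂ) (s : ℂ) :
    mellin f s = 𝓕 (expPullback f s.re) (s.im / (2 * π)) :=
  mellin_eq_fourier f

theorem integral_expPullback (f : ℝ → ℂ) (σ : ℝ) : ∫ u, expPullback f σ u = mellin f σ := by
  rw [mellin_eq_fourier_expPullback]
  simp [Real.fourier_real_eq]

theorem expPullback_mul_expPullback (f g : ℝ → ℂ) (σ τ u : ℝ) :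
    expPullback f σ u * expPullback g τ u = expPullback (fun x => f x * g x) (σ + τ) u := by
  simp only [expPullback, Complex.real_smul, add_mul, neg_add, Real.exp_add, Complex.ofReal_mul]
  ring

theorem integral_expPullback_smul_smul (f₁ f₂ f₃ : ℝ → ℂ) (σ₁ σ₂ σ₃ : ℝ) :
    ∫ u, expPullback f₁ σ₁ u • expPullback f₂ σ₂ u • expPullback f₃ σ₃ u =
      mellin (fun x => f₁ x * f₂ x * f₃ x) ((σ₁ + σ₂ + σ₃ : ℝ) : ℂ) := by
  simp only [smul_eq_mul, ← mul_assoc, expPullback_mul_expPullback]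
  rw [add_assoc]
  exact integral_expPullback _ _

theorem continuous_expPullback {f : ℝ → ℂ} (hf : Continuous f) (σ : ℝ) :
    Continuous (expPullback f σ) := by
  unfold expPullback; fun_prop

theorem hasDerivAt_expPullback {f : ℝ → ℂ} (hf : Differentiable ℝ f) (σ u : ℝ) :
    HasDerivAt (expPullback f σ)
      (-σ • expPullback f σ u - expPullback (deriv f) (σ + 1) u) u := by
  have hexp (a : ℝ) : HasDerivAt (fun u => Real.exp (a * u)) (a * Real.exp (a * u)) u := by
    simpa [mul_comm] using ((hasDerivAt_id u).const_mul a).exp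
  have hf' := (hf (Real.exp (-u))).hasDerivAt.scomp u (by simpa using hexp (-1))
  refine ((hexp (-σ)).smul hf').congr_deriv ?_
  have hsplit : Real.exp (-(σ + 1) * u) = Real.exp (-σ * u) * Real.exp (-u) := by
    rw [← Real.exp_add]; ring_nf
  simp only [expPullback, Function.comp_apply, hsplit, Complex.real_smul, Complex.ofReal_mul,
    Complex.ofReal_neg]
  ring

theorem norm_expPullback_le {f : ℝ → ℂ} {σ C₀ C₁ : ℝ} {k : ℕ} (hk : σ + 1 ≤ k)
    (h₀ : ∀ x, ‖f x‖ ≤ C₀) (h₁ : ∀ x, ‖x‖ ^ k * ‖f x‖ ≤ C₁) (u : ℝ) :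
    ‖expPullback f σ u‖ ≤ max C₀ C₁ * Real.exp (-min σ 1 * |u|) := by
  rw [expPullback, norm_smul, Real.norm_of_nonneg (Real.exp_pos _).le]
  rcases le_total 0 u with hu | hu
  · rw [abs_of_nonneg hu, mul_comm]
    gcongr
    · exact (norm_nonneg _).trans (h₀ 0) |>.trans (le_max_left _ _)
    · exact (h₀ _).trans (le_max_left _ _)
    · exact min_le_left _ _
  · have hC₁ : 0 ≤ C₁ := (by positivity : 0 ≤ ‖(0 : ℝ)‖ ^ k * ‖f 0‖).trans (h₁ 0)
    have hf : ‖f (Real.exp (-u))‖ ≤ C₁ * Real.exp (k * u) := by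
      have hpow : ‖Real.exp (-u)‖ ^ k = Real.exp (-(k * u)) := by
        rw [Real.norm_of_nonneg (Real.exp_pos _).le, ← Real.exp_nat_mul]; ring_nf
      have := h₁ (Real.exp (-u))
      rw [hpow, Real.exp_neg] at this
      rw [mul_comm C₁]
      exact (inv_mul_le_iff₀ (Real.exp_pos _)).mp this
    calc Real.exp (-σ * u) * ‖f (Real.exp (-u))‖
        ≤ Real.exp (-σ * u) * (C₁ * Real.exp (k * u)) := by gcongr
      _ = C₁ * Real.exp ((k - σ) * u) := by rw [mul_left_comm, ← Real.exp_add]; ring_nf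
      _ ≤ C₁ * Real.exp (-min σ 1 * |u|) := by
        rw [abs_of_nonpos hu]
        have hm : min σ 1 ≤ k - σ := by linarith [min_le_right σ 1]
        refine mul_le_mul_of_nonneg_left (Real.exp_le_exp.mpr ?_) hC₁
        nlinarith [mul_le_mul_of_nonpos_right hm hu]
      _ ≤ max C₀ C₁ * Real.exp (-min σ 1 * |u|) := by gcongr; exact le_max_right _ _

namespace SchwartzMap

theorem exists_norm_expPullback_le (f : 𝓢(ℝ, ℂ)) (σ : ℝ) :
    ∃ C, ∀ u, ‖expPullback f σ u‖ ≤ C * Real.exp (-min σ 1 * |u|) :=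
  ⟨_, norm_expPullback_le (k := ⌈σ⌉₊ + 1) (by push_cast; linarith [Nat.le_ceil σ])
    (f.norm_le_seminorm ℝ) (f.norm_pow_mul_le_seminorm ℝ _)⟩

theorem integrable_expPullback (f : 𝓢(ℝ, ℂ)) {σ : ℝ} (hσ : 0 < σ) :
    Integrable (expPullback f σ) := by
  obtain ⟨C, hC⟩ := f.exists_norm_expPullback_le σ
  exact ((integrable_exp_neg_mul_abs (lt_min hσ one_pos)).const_mul C).mono'
    (continuous_expPullback f.continuous σ).aestronglyMeasurable (ae_of_all _ hC)

theorem differentiable_expPullback (f : 𝓢(ℝ, ℂ)) (σ : ℝ) :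
    Differentiable ℝ (expPullback f σ) :=
  fun u => (hasDerivAt_expPullback f.differentiable σ u).differentiableAt

theorem deriv_expPullback (f : 𝓢(ℝ, ℂ)) (σ : ℝ) :
    deriv (expPullback f σ) =
      fun u => -σ • expPullback f σ u - expPullback (derivCLM ℝ ℂ f) (σ + 1) u := by
  ext u
  rw [(hasDerivAt_expPullback f.differentiable σ u).deriv]
  congr 3

theorem integrable_deriv_expPullback (f : 𝓢(ℝ, ℂ)) {σ : ℝ} (hσ : 0 < σ) :
    Integrable (deriv (expPullback f σ)) := by
  rw [deriv_expPullback]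
  exact ((f.integrable_expPullback hσ).smul (-σ)).sub
    ((derivCLM ℝ ℂ f).integrable_expPullback (σ := σ + 1) (by linarith))

theorem integrable_fourier_expPullback (f : 𝓢(ℝ, ℂ)) {σ : ℝ} (hσ : 0 < σ) :
    Integrable (𝓕 (expPullback f σ)) := by
  set f' := derivCLM ℝ ℂ f
  have hdd : deriv (deriv (expPullback f σ)) =
      fun u => -σ • deriv (expPullback f σ) u - deriv (expPullback f' (σ + 1)) u := by
    ext u
    conv_lhs => rw [deriv_expPullback]
    exact (((f.differentiable_expPullback σ u).hasDerivAt.const_smul (-σ)).sub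
      (f'.differentiable_expPullback _ u).hasDerivAt).deriv
  refine Real.integrable_fourier_of_integrable_deriv_deriv_s17 (f.integrable_expPullback hσ)
    (f.differentiable_expPullback σ) (f.integrable_deriv_expPullback hσ) ?_ ?_
  · rw [deriv_expPullback]
    exact ((f.differentiable_expPullback σ).const_smul (-σ)).sub
      (f'.differentiable_expPullback (σ + 1))
  · rw [hdd]
    exact ((f.integrable_deriv_expPullback hσ).smul (-σ)).sub
      (f'.integrable_deriv_expPullback (σ := σ + 1) (by linarith))

theorem integrable_fourier_expPullback_smul_smul (g₁ g₂ g₃ : 𝓢(ℝ, ℂ)) {σ₁ σ₂ σ₃ : ℝ}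
    (hσ₁ : 0 < σ₁) (hσ₂ : 0 < σ₂) (hσ₃ : 0 < σ₃) :
    Integrable (fun ξ : ℝ × ℝ => 𝓕 (expPullback g₁ σ₁) ξ.1 • 𝓕 (expPullback g₂ σ₂) ξ.2 •
      𝓕 (expPullback g₃ σ₃) (-ξ.1 - ξ.2)) :=
  Real.integrable_fourier_smul_fourier_smul_fourier (g₁.integrable_fourier_expPullback hσ₁)
    (g₂.integrable_fourier_expPullback hσ₂) (g₃.integrable_expPullback hσ₃)

theorem integral_integral_fourier_expPullback_smul_smul (g₁ g₂ g₃ : 𝓢(ℝ, ℂ)) {σ₁ σ₂ σ₃ : ℝ}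
    (hσ₁ : 0 < σ₁) (hσ₂ : 0 < σ₂) (hσ₃ : 0 < σ₃) :
    ∫ ξ₁, ∫ ξ₂, 𝓕 (expPullback g₁ σ₁) ξ₁ • 𝓕 (expPullback g₂ σ₂) ξ₂ •
      𝓕 (expPullback g₃ σ₃) (-ξ₁ - ξ₂) =
      mellin (fun x => g₁ x * g₂ x * g₃ x) ((σ₁ + σ₂ + σ₃ : ℝ) : ℂ) := by
  rw [Real.integral_integral_fourier_smul_fourier_smul_fourier (g₁.integrable_expPullback hσ₁)
    (g₁.integrable_fourier_expPullback hσ₁) (continuous_expPullback g₁.continuous σ₁)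
    (g₂.integrable_expPullback hσ₂) (g₂.integrable_fourier_expPullback hσ₂)
    (continuous_expPullback g₂.continuous σ₂) (g₃.integrable_expPullback hσ₃),
    integral_expPullback_smul_smul]

theorem exists_coe_eq_comp_mul (f : 𝓢(ℝ, ℂ)) {a : ℝ} (ha : a ≠ 0) :
    ∃ g : 𝓢(ℝ, ℂ), ⇑g = fun x => f (a * x) :=
  ⟨compCLMOfContinuousLinearEquiv ℂ (ContinuousLinearEquiv.unitsEquivAut ℝ (Units.mk0 a ha)) f,
    funext fun x => by simp [mul_comm]⟩

theorem integrable_pow_mul_mul_mul (f₁ f₂ f₃ : 𝓢(ℝ, ℂ)) (k : ℕ) (α₁ α₂ : ℝ) :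
    Integrable (fun x : ℝ => ((x ^ k : ℝ) : ℂ) * f₁ (α₁ * x) * f₂ (α₂ * x) * f₃ x) := by
  set C₁ := SchwartzMap.seminorm ℝ 0 0 f₁
  set C₂ := SchwartzMap.seminorm ℝ 0 0 f₂
  refine ((f₃.integrable_pow_mul volume k).const_mul (C₁ * C₂)).mono' (by fun_prop)
    (ae_of_all _ fun x => ?_)
  have h₁ := f₁.norm_le_seminorm ℝ (α₁ * x)
  have h₂ := f₂.norm_le_seminorm ℝ (α₂ * x)
  calc ‖((x ^ k : ℝ) : ℂ) * f₁ (α₁ * x) * f₂ (α₂ * x) * f₃ x‖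
      = ‖x‖ ^ k * ‖f₁ (α₁ * x)‖ * ‖f₂ (α₂ * x)‖ * ‖f₃ x‖ := by
        simp only [norm_mul, Complex.norm_real, norm_pow]
    _ ≤ ‖x‖ ^ k * C₁ * C₂ * ‖f₃ x‖ := by gcongr
    _ = C₁ * C₂ * (‖x‖ ^ k * ‖f₃ x‖) := by ring

end SchwartzMap

def celestialIntegrand (f₁ f₂ f₃ : ℝ → ℂ) (α₁ α₂ c l₁ l₂ : ℝ) : ℂ :=
  (α₁ : ℂ) ^ ((c : ℂ) + 1 + l₁ * I) * (α₂ : ℂ) ^ ((c : ℂ) + 1 + l₂ * I) *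
    mellin f₁ (2 - c - l₁ * I) * mellin f₂ (2 - c - l₂ * I) * mellin f₃ (2 * c + (l₁ + l₂) * I)

theorem celestialIntegrand_eq_fourier {f₁ f₂ f₃ : ℝ → ℂ} {α₁ α₂ : ℝ} (hα₁ : 0 < α₁)
    (hα₂ : 0 < α₂) (c l₁ l₂ : ℝ) :
    celestialIntegrand f₁ f₂ f₃ α₁ α₂ c l₁ l₂ = ((α₁ ^ 3 * α₂ ^ 3 : ℝ) : ℂ) *
      (𝓕 (expPullback (fun t => f₁ (α₁ * t)) (2 - c)) (l₁ / -(2 * π)) •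
        𝓕 (expPullback (fun t => f₂ (α₂ * t)) (2 - c)) (l₂ / -(2 * π)) •
        𝓕 (expPullback f₃ (2 * c)) (-(l₁ / -(2 * π)) - l₂ / -(2 * π))) := by
  have h3 (l : ℝ) : (c : ℂ) + 1 + l * I + (2 - c - l * I) = 3 := by ring
  rw [celestialIntegrand, mul_right_comm _ _ (mellin f₁ _), cpow_mul_mellin f₁ hα₁,
    mul_assoc _ _ (mellin f₂ _), cpow_mul_mellin f₂ hα₂]
  simp only [h3, mellin_eq_fourier_expPullback, cpow_ofNat, sub_re, re_ofNat, ofReal_re, mul_re,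
    I_re, mul_zero, ofReal_im, I_im, mul_one, sub_self, sub_zero, sub_im, im_ofNat, mul_im,
    add_zero, zero_sub, add_re, add_im, zero_mul, zero_add, ofReal_mul, ofReal_pow]
  rw [show (l₁ + l₂) / (2 * π) = -(l₁ / -(2 * π)) - l₂ / -(2 * π) by ring]
  simp only [div_neg, neg_div, smul_eq_mul]
  ring

/-- three-graviton celestial bracket identity: for Schwartz
functions `f₁, f₂, f₃`, `α₁, α₂ > 0` and `c ∈ (0,2)`,
`(1/(2π))² ∬ α₁^{c+1+iλ₁} α₂^{c+1+iλ₂} M(f₁)(2−c−iλ₁) M(f₂)(2−c−iλ₂)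
M(f₃)(2c+i(λ₁+λ₂)) dλ₁ dλ₂ = α₁³ α₂³ ∫₀^∞ ω³ f₁(α₁ω) f₂(α₂ω) f₃(ω) dω`,
all integrals converging absolutely. -/
theorem three_graviton_celestial_bracket (f₁ f₂ f₃ : SchwartzMap ℝ ℂ)
    (α₁ α₂ : ℝ) (hα₁ : 0 < α₁) (hα₂ : 0 < α₂) (c : ℝ) (hc0 : 0 < c) (hc2 : c < 2) :
    let M : (ℝ → ℂ) → ℂ → ℂ := fun h s => ∫ ω in Ioi (0 : ℝ), h ω * (ω : ℂ) ^ (s - 1)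
    let F : ℝ → ℝ → ℂ := fun l₁ l₂ =>
      (α₁ : ℂ) ^ ((c : ℂ) + 1 + (l₁ : ℂ) * Complex.I) *
        (α₂ : ℂ) ^ ((c : ℂ) + 1 + (l₂ : ℂ) * Complex.I) *
        M f₁ ((2 : ℂ) - c - (l₁ : ℂ) * Complex.I) *
        M f₂ ((2 : ℂ) - c - (l₂ : ℂ) * Complex.I) *
        M f₃ ((2 * c : ℂ) + ((l₁ : ℂ) + (l₂ : ℂ)) * Complex.I)
    Integrable (fun p : ℝ × ℝ => F p.1 p.2) ∧
      IntegrableOn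
        (fun ω : ℝ => ((ω ^ 3 : ℝ) : ℂ) * f₁ (α₁ * ω) * f₂ (α₂ * ω) * f₃ ω) (Ioi 0) ∧
      ((1 / (2 * Real.pi) : ℝ) : ℂ) ^ 2 * (∫ l₁ : ℝ, ∫ l₂ : ℝ, F l₁ l₂) =
        ((α₁ ^ 3 * α₂ ^ 3 : ℝ) : ℂ) *
          ∫ ω in Ioi (0 : ℝ), ((ω ^ 3 : ℝ) : ℂ) * f₁ (α₁ * ω) * f₂ (α₂ * ω) * f₃ ω := by
  intro M F
  obtain ⟨g₁, hg₁⟩ := f₁.exists_coe_eq_comp_mul hα₁.ne'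
  obtain ⟨g₂, hg₂⟩ := f₂.exists_coe_eq_comp_mul hα₂.ne'
  have hσ : 0 < 2 - c := by linarith
  have h2c : 0 < 2 * c := by linarith
  set H : ℝ → ℝ → ℂ := fun ξ₁ ξ₂ => 𝓕 (expPullback g₁ (2 - c)) ξ₁ •
    𝓕 (expPullback g₂ (2 - c)) ξ₂ • 𝓕 (expPullback f₃ (2 * c)) (-ξ₁ - ξ₂)
  have hF (l₁ l₂ : ℝ) :
      F l₁ l₂ = ((α₁ ^ 3 * α₂ ^ 3 : ℝ) : ℂ) * H (l₁ / -(2 * π)) (l₂ / -(2 * π)) := by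
    rw [show F l₁ l₂ = celestialIntegrand f₁ f₂ f₃ α₁ α₂ c l₁ l₂ by
      simp only [F, M, celestialIntegrand, mellin, smul_eq_mul, mul_comm],
      celestialIntegrand_eq_fourier hα₁ hα₂, ← hg₁, ← hg₂]
  have h2π : -(2 * π) ≠ 0 := by simp [Real.pi_ne_zero]
  refine ⟨?_, (f₁.integrable_pow_mul_mul_mul f₂ f₃ 3 α₁ α₂).integrableOn, ?_⟩
  · simp only [hF]
    exact (integrable_comp_div_prod
      (g₁.integrable_fourier_expPullback_smul_smul g₂ f₃ hσ hσ h2c) h2π).const_mul _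
  · calc ((1 / (2 * π) : ℝ) : ℂ) ^ 2 * ∫ l₁, ∫ l₂, F l₁ l₂
        = ((α₁ ^ 3 * α₂ ^ 3 : ℝ) : ℂ) * (((1 / (2 * π) : ℝ) : ℂ) ^ 2 *
            ((2 * π) • (2 * π) • ∫ ξ₁, ∫ ξ₂, H ξ₁ ξ₂)) := by
          simp only [hF, integral_const_mul, integral_integral_comp_div, abs_neg,
            abs_of_pos Real.two_pi_pos]
          ring
      _ = ((α₁ ^ 3 * α₂ ^ 3 : ℝ) : ℂ) *
            mellin (fun x => g₁ x * g₂ x * f₃ x) (((3 : ℕ) + 1 : ℝ) : ℂ) := by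
          rw [g₁.integral_integral_fourier_expPullback_smul_smul g₂ f₃ hσ hσ h2c]
          simp only [Complex.real_smul]
          push_cast
          field_simp
          ring_nf
      _ = _ := by
          rw [mellin_natCast_add_one, hg₁, hg₂]
          simp only [mul_assoc]
end
end
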